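/- arXiv:math/0701110 — 8 statements merged into one kernel-verified Lean document; each statement's English description precedes it below -/
import Mathlib

section
/- Let d ≥ 1, let f_{l,k} (0 ≤ l, k ≤ d) be complex numbers satisfying f_{l,k} = −f_{k,l} for all l, k, and let t ∈ ℂ. Then the following are equivalent: (i) Σ_{k=0}^{d} f_{l,k} · t^k/k! = 0 for every l = 0,…,d; (ii) Σ_{k=0}^{d−1} F_{l,k} · t^k/k! = 0 for every l = 1,…,d. -/
open Finset in
private lemma aux_prod (n k : ℕ) (h : k ≤ n) :
    (∏ i ∈ Finset.range k, ((n : ℂ) - i)) = (n.descFactorial k : ℂ) := by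
  rw [Nat.descFactorial_eq_prod_range, Nat.cast_prod]
  exact Finset.prod_congr rfl fun i hi => by
    rw [Nat.cast_sub ((Finset.mem_range.mp hi).le.trans h)]

private lemma aux_prod_zero (n k : ℕ) (h : n < k) :
    (∏ i ∈ Finset.range k, ((n : ℂ) - i)) = 0 :=
  Finset.prod_eq_zero (Finset.mem_range.mpr h) (by simp)

private lemma key_fact {d m : ℕ} (h : m ≤ d) :
    m.factorial * d.descFactorial (d - m) = d.factorial := by
  have := Nat.factorial_mul_descFactorial (Nat.sub_le d m)
  rwa [Nat.sub_sub_self h] at this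

private lemma key_factC {d m : ℕ} (h : m ≤ d) :
    (m.factorial : ℂ) * (d.descFactorial (d - m) : ℂ) = (d.factorial : ℂ) := by
  exact_mod_cast congrArg (Nat.cast : ℕ → ℂ) (key_fact h)

private lemma sum_shift (h : ℕ → ℂ) (r n : ℕ) (hrn : r ≤ n)
    (hz : ∀ k, k < r → h k = 0) :
    ∑ k ∈ Finset.range n, h k = ∑ j ∈ Finset.range (n - r), h (r + j) := by
  obtain ⟨m, rfl⟩ := Nat.exists_eq_add_of_le hrn
  rw [Finset.sum_range_add, Finset.sum_eq_zero fun k hk => hz k (Finset.mem_range.mp hk),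
    zero_add, Nat.add_sub_cancel_left]

/-- `F_{l,k} := Σ_{r=0}^{min(d−l,k)} f_{l+r,k−r} · (∏_{j=0}^{d−l−r−1}(d−j)) · (∏_{j=0}^{r−1}(k−j))`,
where empty products equal `1`. -/
noncomputable def Fcoef (d : ℕ) (f : ℕ → ℕ → ℂ) (l k : ℕ) : ℂ :=
  ∑ r ∈ Finset.range (min (d - l) k + 1),
    f (l + r) (k - r) * (∏ j ∈ Finset.range (d - l - r), ((d : ℂ) - (j : ℂ))) *
      (∏ j ∈ Finset.range r, ((k : ℂ) - (j : ℂ)))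

private lemma corr_zero (d l : ℕ) (hl : l ≤ d) (f : ℕ → ℕ → ℂ)
    (hskew : ∀ l k, l ≤ d → k ≤ d → f l k = - f k l) (t : ℂ) :
    ∑ p ∈ (Finset.range (d - l + 1)).sigma (fun r => Finset.range (r + 1)),
      (d.descFactorial (d - (l + p.1)) : ℂ) * t ^ p.1 *
        (f (l + p.1) (d - p.1 + p.2) *
          (t ^ (d - p.1 + p.2) / ((d - p.1 + p.2).factorial : ℂ))) = 0 := by
  apply Finset.sum_involution
    (g := fun p (_ : p ∈ (Finset.range (d - l + 1)).sigma (fun r => Finset.range (r + 1))) =>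
      (⟨d - p.1 + p.2 - l, p.2⟩ : (_ : ℕ) × ℕ))
  · -- sums to zero
    rintro ⟨r, j⟩ hp
    simp only [Finset.mem_sigma, Finset.mem_range] at hp
    obtain ⟨hr, hj⟩ := hp
    have hr' : r ≤ d - l := by omega
    have hj' : j ≤ r := by omega
    have hm : l + r ≤ d := by omega
    have hn : d - r + j ≤ d := by omega
    have h1 : l + (d - r + j - l) = d - r + j := by omega
    have h2 : d - (d - r + j - l) + j = l + r := by omega
    simp only [h1, h2]
    rw [hskew (d - r + j) (l + r) hn hm]
    have hfm : ((l + r).factorial : ℂ) ≠ 0 := by exact_mod_cast (l + r).factorial_ne_zero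
    have hfn : ((d - r + j).factorial : ℂ) ≠ 0 := by exact_mod_cast (d - r + j).factorial_ne_zero
    have e3 : (d.descFactorial (d - (l + r)) : ℂ) * ((l + r).factorial : ℂ) =
        (d.descFactorial (d - (d - r + j)) : ℂ) * ((d - r + j).factorial : ℂ) := by
      rw [mul_comm, key_factC hm, mul_comm, key_factC hn]
    have hexp : r + (d - r + j) = (d - r + j - l) + (l + r) := by omega
    have hpow : t ^ (d - r + j - l) * t ^ (l + r) = t ^ r * t ^ (d - r + j) := by
      rw [← pow_add, ← pow_add]
      congr 1
      omega
    have goal_eq : (d.descFactorial (d - (l + r)) : ℂ) * t ^ r *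
        (t ^ (d - r + j) / ((d - r + j).factorial : ℂ)) =
        (d.descFactorial (d - (d - r + j)) : ℂ) * t ^ (d - r + j - l) *
        (t ^ (l + r) / ((l + r).factorial : ℂ)) := by
      rw [← mul_div_assoc, ← mul_div_assoc, div_eq_div_iff hfn hfm]
      linear_combination (t ^ r * t ^ (d - r + j)) * e3 -
        ((d.descFactorial (d - (d - r + j)) : ℂ) * ((d - r + j).factorial : ℂ)) * hpow
    linear_combination (f (l + r) (d - r + j)) * goal_eq
  · -- fixed points have zero term
    rintro ⟨r, j⟩ hp hne heq
    simp only [Finset.mem_sigma, Finset.mem_range] at hp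
    have hfst : d - r + j - l = r := congrArg Sigma.fst heq
    have : d - r + j = l + r := by omega
    apply hne
    rw [this]
    have hf : f (l + r) (l + r) = 0 := by
      have := hskew (l + r) (l + r) (by omega) (by omega)
      linear_combination this / 2
    rw [hf]
    ring
  · -- maps into the set
    rintro ⟨r, j⟩ hp
    simp only [Finset.mem_sigma, Finset.mem_range] at hp ⊢
    omega
  · -- involutive
    rintro ⟨r, j⟩ hp
    simp only [Finset.mem_sigma, Finset.mem_range] at hp
    exact Sigma.ext (show d - (d - r + j - l) + j - l = r by omega) HEq.rfl

private lemma sumF_eq (d : ℕ) (f : ℕ → ℕ → ℂ)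
    (hskew : ∀ l k, l ≤ d → k ≤ d → f l k = - f k l) (t : ℂ) {l : ℕ} (hl : l ≤ d) :
    ∑ k ∈ Finset.range d, Fcoef d f l k * (t ^ k / (k.factorial : ℂ)) =
    ∑ r ∈ Finset.range (d - l + 1), (d.descFactorial (d - (l + r)) : ℂ) * t ^ r *
      ∑ j ∈ Finset.range (d + 1), f (l + r) j * (t ^ j / (j.factorial : ℂ)) := by
  have step1 : ∀ k, Fcoef d f l k =
      ∑ r ∈ Finset.range (d - l + 1), f (l + r) (k - r) *
        (d.descFactorial (d - (l + r)) : ℂ) * ∏ j ∈ Finset.range r, ((k : ℂ) - j) := by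
    intro k
    unfold Fcoef
    rw [← Finset.sum_subset (Finset.range_subset_range.mpr (by omega : min (d - l) k + 1 ≤ d - l + 1))]
    · refine Finset.sum_congr rfl fun r hr => ?_
      have hr' : r ≤ min (d - l) k := Nat.lt_succ_iff.mp (Finset.mem_range.mp hr)
      rw [Nat.sub_sub, aux_prod d (d - (l + r)) (by omega)]
    · intro r hr hnr
      simp only [Finset.mem_range] at hr hnr
      rw [aux_prod_zero k r (by omega), mul_zero]
  calc ∑ k ∈ Finset.range d, Fcoef d f l k * (t ^ k / (k.factorial : ℂ))
      = ∑ k ∈ Finset.range d, ∑ r ∈ Finset.range (d - l + 1),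
          f (l + r) (k - r) * (d.descFactorial (d - (l + r)) : ℂ) *
            (∏ j ∈ Finset.range r, ((k : ℂ) - j)) * (t ^ k / (k.factorial : ℂ)) := by
        simp_rw [step1, Finset.sum_mul]
    _ = ∑ r ∈ Finset.range (d - l + 1), ∑ k ∈ Finset.range d,
          f (l + r) (k - r) * (d.descFactorial (d - (l + r)) : ℂ) *
            (∏ j ∈ Finset.range r, ((k : ℂ) - j)) * (t ^ k / (k.factorial : ℂ)) :=
        Finset.sum_comm
    _ = ∑ r ∈ Finset.range (d - l + 1), (d.descFactorial (d - (l + r)) : ℂ) * t ^ r *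
          ∑ j ∈ Finset.range (d - r), f (l + r) j * (t ^ j / (j.factorial : ℂ)) := by
        refine Finset.sum_congr rfl fun r hr => ?_
        have hr' : r ≤ d - l := Nat.lt_succ_iff.mp (Finset.mem_range.mp hr)
        rw [sum_shift _ r d (by omega)
          (fun k hk => by rw [aux_prod_zero k r hk, mul_zero, zero_mul])]
        rw [Finset.mul_sum]
        refine Finset.sum_congr rfl fun j hj => ?_
        rw [aux_prod (r + j) r (Nat.le_add_right r j), Nat.add_sub_cancel_left]
        have hfac : ((r + j).factorial : ℂ) =
            (j.factorial : ℂ) * ((r + j).descFactorial r : ℂ) := by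
          have := Nat.factorial_mul_descFactorial (Nat.le_add_right r j)
          rw [Nat.add_sub_cancel_left] at this
          exact_mod_cast this.symm
        have hdf : ((r + j).descFactorial r : ℂ) ≠ 0 := by
          have : ¬ (r + j < r) := by omega
          exact_mod_cast fun h => this (Nat.descFactorial_eq_zero_iff_lt.mp (by exact_mod_cast h))
        have hjf : ((j).factorial : ℂ) ≠ 0 := by exact_mod_cast j.factorial_ne_zero
        rw [hfac, pow_add]
        field_simp
    _ = ∑ r ∈ Finset.range (d - l + 1), (d.descFactorial (d - (l + r)) : ℂ) * t ^ r *
          ∑ j ∈ Finset.range (d + 1), f (l + r) j * (t ^ j / (j.factorial : ℂ)) := by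
        have hsplit : ∀ r ∈ Finset.range (d - l + 1),
            (d.descFactorial (d - (l + r)) : ℂ) * t ^ r *
              ∑ j ∈ Finset.range (d + 1), f (l + r) j * (t ^ j / (j.factorial : ℂ)) =
            (d.descFactorial (d - (l + r)) : ℂ) * t ^ r *
              ∑ j ∈ Finset.range (d - r), f (l + r) j * (t ^ j / (j.factorial : ℂ)) +
            ∑ j ∈ Finset.range (r + 1),
              (d.descFactorial (d - (l + r)) : ℂ) * t ^ r *
                (f (l + r) (d - r + j) *
                  (t ^ (d - r + j) / ((d - r + j).factorial : ℂ))) := by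
          intro r hr
          have hr' : r ≤ d - l := Nat.lt_succ_iff.mp (Finset.mem_range.mp hr)
          have h1 : d + 1 = (d - r) + (r + 1) := by omega
          rw [h1, Finset.sum_range_add, mul_add]
          congr 1
          exact Finset.mul_sum _ _ _
        rw [Finset.sum_congr rfl hsplit, Finset.sum_add_distrib,
          Finset.sum_sigma' (Finset.range (d - l + 1)) (fun r => Finset.range (r + 1)),
          corr_zero d l hl f hskew t, add_zero]

private lemma total_zero (d : ℕ) (f : ℕ → ℕ → ℂ)
    (hskew : ∀ l k, l ≤ d → k ≤ d → f l k = - f k l) (t : ℂ) :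
    ∑ l ∈ Finset.range (d + 1), (t ^ l / (l.factorial : ℂ)) *
      ∑ k ∈ Finset.range (d + 1), f l k * (t ^ k / (k.factorial : ℂ)) = 0 := by
  have h1 : ∑ l ∈ Finset.range (d + 1), ∑ k ∈ Finset.range (d + 1),
      (t ^ l / (l.factorial : ℂ)) * (f l k * (t ^ k / (k.factorial : ℂ))) =
      - ∑ l ∈ Finset.range (d + 1), ∑ k ∈ Finset.range (d + 1),
      (t ^ l / (l.factorial : ℂ)) * (f l k * (t ^ k / (k.factorial : ℂ))) := by
    calc ∑ l ∈ Finset.range (d + 1), ∑ k ∈ Finset.range (d + 1),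
        (t ^ l / (l.factorial : ℂ)) * (f l k * (t ^ k / (k.factorial : ℂ)))
        = ∑ k ∈ Finset.range (d + 1), ∑ l ∈ Finset.range (d + 1),
          (t ^ l / (l.factorial : ℂ)) * (f l k * (t ^ k / (k.factorial : ℂ))) :=
        Finset.sum_comm
      _ = ∑ x ∈ Finset.range (d + 1), ∑ y ∈ Finset.range (d + 1),
          -((t ^ x / (x.factorial : ℂ)) * (f x y * (t ^ y / (y.factorial : ℂ)))) := by
        refine Finset.sum_congr rfl fun x hx => Finset.sum_congr rfl fun y hy => ?_
        rw [hskew y x (Nat.lt_succ_iff.mp (Finset.mem_range.mp hy))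
          (Nat.lt_succ_iff.mp (Finset.mem_range.mp hx))]
        ring
      _ = - ∑ l ∈ Finset.range (d + 1), ∑ k ∈ Finset.range (d + 1),
          (t ^ l / (l.factorial : ℂ)) * (f l k * (t ^ k / (k.factorial : ℂ))) := by
        simp
  have h2 : ∑ l ∈ Finset.range (d + 1), (t ^ l / (l.factorial : ℂ)) *
      ∑ k ∈ Finset.range (d + 1), f l k * (t ^ k / (k.factorial : ℂ)) =
      ∑ l ∈ Finset.range (d + 1), ∑ k ∈ Finset.range (d + 1),
      (t ^ l / (l.factorial : ℂ)) * (f l k * (t ^ k / (k.factorial : ℂ))) := by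
    simp_rw [Finset.mul_sum]
  rw [h2]
  linear_combination h1 / 2

/-- **Lemma `fdFd-1`.** If `f_{l,k} = −f_{k,l}`, then for `t ∈ ℂ`:
`Σ_{k=0}^{d} f_{l,k} t^k/k! = 0` for every `l = 0,…,d` iff
`Σ_{k=0}^{d−1} F_{l,k} t^k/k! = 0` for every `l = 1,…,d`. -/
theorem lin_system_f_iff_lin_system_F
    {d : ℕ} (hd : 1 ≤ d) (f : ℕ → ℕ → ℂ)
    (hskew : ∀ l k, l ≤ d → k ≤ d → f l k = - f k l) (t : ℂ) :
    (∀ l, l ≤ d → ∑ k ∈ Finset.range (d + 1), f l k * (t ^ k / (k.factorial : ℂ)) = 0) ↔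
    (∀ l, 1 ≤ l → l ≤ d →
      ∑ k ∈ Finset.range d, Fcoef d f l k * (t ^ k / (k.factorial : ℂ)) = 0) := by
  constructor
  · intro h l _ hl
    rw [sumF_eq d f hskew t hl]
    refine Finset.sum_eq_zero fun r hr => ?_
    have hr' : r ≤ d - l := Nat.lt_succ_iff.mp (Finset.mem_range.mp hr)
    rw [h (l + r) (by omega), mul_zero]
  · intro h
    have main : ∀ m, m ≤ d - 1 →
        ∑ k ∈ Finset.range (d + 1), f (d - m) k * (t ^ k / (k.factorial : ℂ)) = 0 := by
      intro m
      induction m using Nat.strong_induction_on with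
      | _ m ih =>
        intro hm
        have hld : d - m ≤ d := Nat.sub_le d m
        have h0 := h (d - m) (by omega) hld
        rw [sumF_eq d f hskew t hld] at h0
        rw [Finset.sum_eq_single 0 ?_ ?_] at h0
        · have hdm : d - (d - m + 0) = m := by omega
          rw [hdm, pow_zero, mul_one] at h0
          have hdf : ((d.descFactorial m : ℕ) : ℂ) ≠ 0 := by
            have : ¬ (d < m) := by omega
            exact_mod_cast fun hc => this (Nat.descFactorial_eq_zero_iff_lt.mp
              (by exact_mod_cast hc))
          have := mul_eq_zero.mp h0
          rcases this with hc | hc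
          · exact absurd hc hdf
          · simpa using hc
        · intro r hr hr0
          have hr' : r ≤ d - (d - m) := Nat.lt_succ_iff.mp (Finset.mem_range.mp hr)
          have hidx : d - m + r = d - (m - r) := by omega
          rw [hidx, ih (m - r) (by omega) (by omega), mul_zero]
        · intro hc
          exact absurd (Finset.mem_range.mpr (by omega)) hc
    have Spos : ∀ l, 1 ≤ l → l ≤ d →
        ∑ k ∈ Finset.range (d + 1), f l k * (t ^ k / (k.factorial : ℂ)) = 0 := by
      intro l h1 h2
      have := main (d - l) (by omega)
      rwa [Nat.sub_sub_self h2] at this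
    intro l hl
    rcases Nat.eq_zero_or_pos l with rfl | hp
    · have htot := total_zero d f hskew t
      rw [Finset.sum_range_succ'] at htot
      have hz : ∑ i ∈ Finset.range d, (t ^ (i + 1) / ((i + 1).factorial : ℂ)) *
          ∑ k ∈ Finset.range (d + 1), f (i + 1) k * (t ^ k / (k.factorial : ℂ)) = 0 :=
        Finset.sum_eq_zero fun i hi => by
          rw [Spos (i + 1) (by omega) (by
            have := Finset.mem_range.mp hi; omega), mul_zero]
      rw [hz, zero_add] at htot
      simpa using htot
    · exact Spos l hp hl
end

section
/- Let d ≥ 1 and let B₀, B₁, …, B_d be complex numbers. Define A_k := [k=0] for 0 ≤ k ≤ d, f_{l,k} := B_l A_k − A_l B_k, and F_{l,k} as below. Then det((F_{l,k})_{1 ≤ l ≤ d, 0 ≤ k ≤ d−1}) = (−1)^{d(d−1)/2} · (∏_{k=0}^{d−1} k!) · B_d^{ d}. (Applied with B_k = (δ^k x_j)(p), this shows the Chow-form determinant is not identically zero in (α,β) whenever (δ^d x_j)(p) ≠ 0.) -/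
open Finset Equiv

lemma nat_prod_sub (n : ℕ) : ∏ j ∈ range n, (n - j) = n.factorial := by
  have h1 : ∏ j ∈ range n, (n - j) = ∏ j ∈ range n, ((n - 1 - j) + 1) :=
    Finset.prod_congr rfl fun j hj => by have := Finset.mem_range.mp hj; omega
  rw [h1, Finset.prod_range_reflect (fun j => j + 1) n,
    Finset.prod_range_add_one_eq_factorial]

lemma prod_cast_fact (k : ℕ) : (∏ j ∈ range k, ((k : ℂ) - (j : ℂ))) = k.factorial := by
  have : ∀ j ∈ range k, ((k : ℂ) - (j : ℂ)) = ((k - j : ℕ) : ℂ) := by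
    intro j hj
    rw [Nat.cast_sub (le_of_lt (Finset.mem_range.mp hj))]
  rw [Finset.prod_congr rfl this, ← Nat.cast_prod, nat_prod_sub]

lemma Fcoef_eq (d : ℕ) (B : ℕ → ℂ) (f : ℕ → ℕ → ℂ)
    (hf : ∀ l k, f l k = B l * (if k = 0 then (1:ℂ) else 0) - (if l = 0 then (1:ℂ) else 0) * B k)
    (l k : ℕ) (hl : 1 ≤ l) (hld : l ≤ d) :
    Fcoef d f l k = if l + k ≤ d then
      (k.factorial : ℂ) * (∏ j ∈ range (d - l - k), ((d : ℂ) - (j : ℂ))) * B (l + k)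
    else 0 := by
  unfold Fcoef
  have step : ∀ r ∈ range (min (d - l) k + 1),
      f (l + r) (k - r) * (∏ j ∈ Finset.range (d - l - r), ((d : ℂ) - (j : ℂ))) *
        (∏ j ∈ Finset.range r, ((k : ℂ) - (j : ℂ)))
      = if r = k then
          (k.factorial : ℂ) * (∏ j ∈ range (d - l - k), ((d : ℂ) - (j : ℂ))) * B (l + k)
        else 0 := by
    intro r hr
    have hr' : r ≤ min (d - l) k := by
      have := Finset.mem_range.mp hr; omega
    by_cases h : r = k
    · subst h
      rw [if_pos rfl, hf, Nat.sub_self, prod_cast_fact]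
      have h1 : l + r ≠ 0 := by omega
      simp only [if_neg h1, if_pos rfl, if_true, zero_mul, sub_zero, mul_one]
      ring
    · have h2 : ¬ (k - r = 0) := by omega
      have h3 : ¬ (l + r = 0) := by omega
      rw [if_neg h, hf, if_neg h2, if_neg h3]
      ring
  rw [Finset.sum_congr rfl step, Finset.sum_ite_eq' (range (min (d - l) k + 1)) k]
  by_cases hcond : l + k ≤ d
  · rw [if_pos (by simp only [Finset.mem_range]; omega), if_pos hcond]
  · rw [if_neg (by simp only [Finset.mem_range]; omega), if_neg hcond]

def finCastEquiv (n : ℕ) : Fin n ≃ {x : Fin (n+1) // (x : ℕ) < n} where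
  toFun i := ⟨i.castSucc, i.isLt⟩
  invFun x := ⟨x.1, x.2⟩
  left_inv _ := rfl
  right_inv _ := rfl

lemma rev_succ (n : ℕ) :
    (Fin.revPerm : Equiv.Perm (Fin (n+1)))
      = finRotate (n+1) * (Fin.revPerm : Equiv.Perm (Fin n)).extendDomain (finCastEquiv n) := by
  ext i
  rcases lt_or_ge (i : ℕ) n with h | h
  · have key := Equiv.Perm.extendDomain_apply_subtype (Fin.revPerm (n := n))
      (finCastEquiv n) (b := i) h
    rw [Equiv.Perm.mul_apply, key]
    simp only [finCastEquiv, Equiv.coe_fn_mk, Equiv.coe_fn_symm_mk, Fin.revPerm_apply,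
      finRotate_succ_apply, Fin.val_rev]
    rw [Fin.val_add_one]
    have hne : ¬ ((⟨i, h⟩ : Fin n).rev.castSucc = Fin.last n) := by
      simp only [Fin.ext_iff, Fin.val_rev, Fin.coe_castSucc, Fin.val_last]
      omega
    rw [if_neg hne]
    simp only [Fin.coe_castSucc, Fin.val_rev]
    omega
  · have key := Equiv.Perm.extendDomain_apply_not_subtype (Fin.revPerm (n := n))
      (finCastEquiv n) (b := i) (by omega)
    rw [Equiv.Perm.mul_apply, key]
    have hi : i = Fin.last n := by apply Fin.ext; have := i.isLt; simp; omega
    subst hi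
    simp [finRotate_succ_apply, Fin.val_rev, Fin.val_add_one]

lemma tri_eq (n : ℕ) : n + n * (n - 1) / 2 = (n + 1) * n / 2 := by
  cases n with
  | zero => rfl
  | succ m =>
      rw [Nat.add_sub_cancel,
        show (m + 1 + 1) * (m + 1) = (m + 1) * m + 2 * (m + 1) from by ring,
        Nat.add_mul_div_left _ _ (by norm_num)]
      omega

lemma sign_revPerm (n : ℕ) :
    Equiv.Perm.sign (Fin.revPerm : Equiv.Perm (Fin n)) = (-1) ^ (n * (n - 1) / 2) := by
  induction n with
  | zero => simp [Subsingleton.elim (Fin.revPerm : Equiv.Perm (Fin 0)) 1]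
  | succ n ih =>
      rw [rev_succ, map_mul, sign_finRotate, Equiv.Perm.sign_extendDomain, ih, ← pow_add]
      congr 1
      rw [Nat.add_sub_cancel]
      exact tri_eq n


/-- With `A_k := [k=0]` and `f_{l,k} := B_l A_k − A_l B_k`, the Chow-form
determinant equals `(−1)^{d(d−1)/2} · (∏_{k=0}^{d−1} k!) · B_d^d`. -/
theorem chow_determinant_of_single_hyperplane_family
    {d : ℕ} (hd : 1 ≤ d) (B : ℕ → ℂ)
    (A : ℕ → ℂ) (f : ℕ → ℕ → ℂ)
    (hA : A = fun k => if k = 0 then (1 : ℂ) else 0)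
    (hf : f = fun l k => B l * A k - A l * B k) :
    Matrix.det (fun l k : Fin d => Fcoef d f ((l : ℕ) + 1) (k : ℕ))
      = (-1) ^ (d * (d - 1) / 2) * (∏ k ∈ Finset.range d, (k.factorial : ℂ)) * B d ^ d := by
  have hf' : ∀ l k, f l k
      = B l * (if k = 0 then (1:ℂ) else 0) - (if l = 0 then (1:ℂ) else 0) * B k := by
    intro l k; rw [hf, hA]
  set N : Matrix (Fin d) (Fin d) ℂ :=
    fun i j => Fcoef d f ((i : ℕ) + 1) ((Fin.rev j : Fin d) : ℕ) with hN
  have hM : (fun l k : Fin d => Fcoef d f ((l : ℕ) + 1) (k : ℕ))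
      = N.submatrix id Fin.revPerm := by
    ext i j
    simp only [Matrix.submatrix_apply, id_eq, hN, Fin.revPerm_apply, Fin.rev_rev]
    show Fcoef d f ((i : ℕ) + 1) (j : ℕ) = Fcoef d f ((i : ℕ) + 1) ((Fin.rev (Fin.revPerm j) : Fin d) : ℕ)
    simp only [Fin.revPerm_apply, Fin.rev_rev]
  have hNval : ∀ i j : Fin d, N i j = Fcoef d f ((i : ℕ) + 1) (d - ((j : ℕ) + 1)) := by
    intro i j; simp only [hN, Fin.val_rev]
  have hupper : N.BlockTriangular id := by
    intro i j hji
    rw [hNval, Fcoef_eq d B f hf' _ _ (by omega) (by have := i.isLt; omega),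
      if_neg (by have := i.isLt; have := j.isLt; have : (j:ℕ) < (i:ℕ) := hji; omega)]
  have hdiag : ∀ i : Fin d, N i i = ((d - ((i : ℕ) + 1)).factorial : ℂ) * B d := by
    intro i
    rw [hNval, Fcoef_eq d B f hf' _ _ (by omega) (by have := i.isLt; omega),
      if_pos (by have := i.isLt; omega)]
    have h1 : d - ((i : ℕ) + 1) - (d - ((i : ℕ) + 1)) = 0 := by omega
    have h2 : (i : ℕ) + 1 + (d - ((i : ℕ) + 1)) = d := by have := i.isLt; omega
    rw [h1, h2, Finset.range_zero, Finset.prod_empty, mul_one]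
  rw [hM, Matrix.det_permute', sign_revPerm, Matrix.det_of_upperTriangular hupper]
  have hprod : ∏ i : Fin d, N i i = (∏ k ∈ Finset.range d, (k.factorial : ℂ)) * B d ^ d := by
    rw [Finset.prod_congr rfl (fun i _ => hdiag i), Finset.prod_mul_distrib,
      Finset.prod_const, Finset.card_univ, Fintype.card_fin]
    congr 1
    rw [Fin.prod_univ_eq_prod_range (fun i => ((d - (i + 1)).factorial : ℂ)) d,
      Finset.prod_congr rfl (fun i hi => by rw [show d - (i + 1) = d - 1 - i from by omega]),
      Finset.prod_range_reflect (fun k => ((k.factorial : ℂ))) d]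
  rw [hprod]
  push_cast
  ring
end

section
/- Let δ be a locally nilpotent ℂ-derivation of ℂ[x₁,…,xₙ] with δ^{d+1} x_j = 0 for all j, where d ≥ 1, and let p ∈ ℂⁿ be a point with (δ^d x_j)(p) ≠ 0 for some j. Then there exist α, β ∈ ℂ^{n+1} such that, with A_k := α₀·[k=0] + Σ_{j=1}^{n} α_j (δ^k x_j)(p), B_k := β₀·[k=0] + Σ_{j=1}^{n} β_j (δ^k x_j)(p), f_{l,k} := B_l A_k − A_l B_k and F_{l,k} as below, the determinant det((F_{l,k})_{1 ≤ l ≤ d, 0 ≤ k ≤ d−1}) is nonzero. In other words, the Chow-form polynomial P(p) of the orbit through p is a nontrivial polynomial in (α,β). -/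
open MvPolynomial

/-- `A_k := α₀·[k=0] + Σ_{j=1}^{n} α_j (δ^k x_j)(p)`. -/
noncomputable def hyperplaneCoef {n : ℕ}
    (δ : Derivation ℂ (MvPolynomial (Fin n) ℂ) (MvPolynomial (Fin n) ℂ))
    (p : Fin n → ℂ) (α : Fin (n + 1) → ℂ) (k : ℕ) : ℂ :=
  α 0 * (if k = 0 then 1 else 0) + ∑ j : Fin n, α j.succ * eval p ((⇑δ)^[k] (X j))

lemma Fcoef_calc (d : ℕ) (B : ℕ → ℂ) (l k : ℕ) (hl : 1 ≤ l) (hld : l ≤ d) :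
    Fcoef d (fun l' k' => B l' * (if k' = 0 then (1:ℂ) else 0)
      - (if l' = 0 then (1:ℂ) else 0) * B k') l k
    = if l + k ≤ d then
        B (l + k) * (∏ j ∈ Finset.range (d - l - k), ((d : ℂ) - (j : ℂ)))
          * (∏ j ∈ Finset.range k, ((k : ℂ) - (j : ℂ)))
      else 0 := by
  unfold Fcoef
  by_cases h : l + k ≤ d
  · rw [if_pos h]
    have hmin : min (d - l) k = k := by omega
    rw [hmin]
    rw [Finset.sum_eq_single k]
    · have h1 : k - k = 0 := by omega
      have h2 : l + k ≠ 0 := by omega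
      simp [h1, h2, show l ≠ 0 by omega]
    · intro r hr hrk
      have h1 : k - r ≠ 0 := by
        simp only [Finset.mem_range] at hr; omega
      have h2 : l + r ≠ 0 := by omega
      simp [h1, h2, show l ≠ 0 by omega]
    · intro hk
      exact absurd (Finset.self_mem_range_succ k) hk
  · rw [if_neg h]
    apply Finset.sum_eq_zero
    intro r hr
    have h1 : k - r ≠ 0 := by
      simp only [Finset.mem_range] at hr; omega
    have h2 : l + r ≠ 0 := by omega
    simp [h1, h2, show l ≠ 0 by omega]

/-- If `(δ^d x_j)(p) ≠ 0` for some `j`, then there exist `α, β` for which the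
Chow-form determinant is nonzero, i.e., the Chow form `P(p)` is a nontrivial polynomial. -/
theorem chow_form_is_nontrivial_on_generic_orbit
    {n d : ℕ} (hd : 1 ≤ d)
    (δ : Derivation ℂ (MvPolynomial (Fin n) ℂ) (MvPolynomial (Fin n) ℂ))
    (hln : ∀ f : MvPolynomial (Fin n) ℂ, ∃ N : ℕ, (⇑δ)^[N] f = 0)
    (hdeg : ∀ j : Fin n, (⇑δ)^[d + 1] (X j) = 0)
    (p : Fin n → ℂ) (hp : ∃ j : Fin n, eval p ((⇑δ)^[d] (X j)) ≠ 0) :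
    ∃ α β : Fin (n + 1) → ℂ,
      Matrix.det (fun l k : Fin d =>
        Fcoef d
          (fun l' k' => hyperplaneCoef δ p β l' * hyperplaneCoef δ p α k'
            - hyperplaneCoef δ p α l' * hyperplaneCoef δ p β k')
          ((l : ℕ) + 1) (k : ℕ)) ≠ 0 := by
  obtain ⟨j₀, hj₀⟩ := hp
  set B : ℕ → ℂ := fun k => eval p ((⇑δ)^[k] (X j₀)) with hBdef
  refine ⟨Pi.single 0 1, Pi.single j₀.succ 1, ?_⟩
  have hA : ∀ k, hyperplaneCoef δ p (Pi.single 0 1) k = if k = 0 then 1 else 0 := by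
    intro k
    unfold hyperplaneCoef
    rw [Pi.single_eq_same]
    have h0 : ∀ j : Fin n, (Pi.single (0 : Fin (n+1)) (1:ℂ) : Fin (n+1) → ℂ) j.succ = 0 := by
      intro j
      exact Pi.single_eq_of_ne (Fin.succ_ne_zero j) 1
    simp [h0]
  have hB : ∀ k, hyperplaneCoef δ p (Pi.single j₀.succ 1) k = B k := by
    intro k
    unfold hyperplaneCoef
    rw [Pi.single_eq_of_ne (Fin.succ_ne_zero j₀).symm]
    rw [Finset.sum_eq_single j₀]
    · simp [hBdef]
    · intro j _ hj
      rw [Pi.single_eq_of_ne (fun h => hj (Fin.succ_injective _ h))]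
      ring
    · simp
  have hf : (fun l' k' => hyperplaneCoef δ p (Pi.single j₀.succ 1) l'
        * hyperplaneCoef δ p (Pi.single 0 1) k'
      - hyperplaneCoef δ p (Pi.single 0 1) l' * hyperplaneCoef δ p (Pi.single j₀.succ 1) k')
      = fun l' k' => B l' * (if k' = 0 then (1:ℂ) else 0)
      - (if l' = 0 then (1:ℂ) else 0) * B k' := by
    funext l' k'
    rw [hA, hA, hB, hB]
  set M : Matrix (Fin d) (Fin d) ℂ := fun l k =>
    Fcoef d
      (fun l' k' => hyperplaneCoef δ p (Pi.single j₀.succ 1) l'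
          * hyperplaneCoef δ p (Pi.single 0 1) k'
        - hyperplaneCoef δ p (Pi.single 0 1) l' * hyperplaneCoef δ p (Pi.single j₀.succ 1) k')
      ((l : ℕ) + 1) (k : ℕ) with hMdef
  have hM : ∀ l k : Fin d, M l k =
      if (l : ℕ) + 1 + (k : ℕ) ≤ d then
        B ((l : ℕ) + 1 + k) * (∏ j ∈ Finset.range (d - ((l:ℕ)+1) - k), ((d : ℂ) - (j : ℂ)))
          * (∏ j ∈ Finset.range (k : ℕ), (((k:ℕ) : ℂ) - (j : ℂ)))
      else 0 := by
    intro l k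
    rw [hMdef]
    simp only
    rw [hf, Fcoef_calc d B ((l:ℕ)+1) (k:ℕ) (by omega) (by omega)]
  -- the reversed matrix is lower triangular
  have hzero : ∀ i k : Fin d, i < k → M i.rev k = 0 := by
    intro i k hik
    rw [hM]
    have h1 : (i.rev : ℕ) = d - 1 - i := by
      rw [Fin.val_rev]; omega
    rw [if_neg]
    rw [h1]
    have := i.isLt
    have := k.isLt
    have : (i : ℕ) < (k : ℕ) := hik
    omega
  have hdiag : ∀ i : Fin d, M i.rev i = B d * ∏ j ∈ Finset.range (i : ℕ),
      (((i:ℕ) : ℂ) - (j : ℂ)) := by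
    intro i
    rw [hM]
    have h1 : (i.rev : ℕ) = d - 1 - i := by
      rw [Fin.val_rev]; omega
    have hlt := i.isLt
    have h2 : (i.rev : ℕ) + 1 + i = d := by omega
    rw [if_pos (by omega), h2]
    have h3 : d - ((i.rev : ℕ) + 1) - i = 0 := by omega
    rw [h3]
    simp
  have hdiag_ne : ∀ i : Fin d, M i.rev i ≠ 0 := by
    intro i
    rw [hdiag]
    apply mul_ne_zero hj₀
    rw [Finset.prod_ne_zero_iff]
    intro j hj
    simp only [Finset.mem_range] at hj
    rw [sub_ne_zero]
    exact_mod_cast Nat.ne_of_gt hj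
  have hdet' : (M.submatrix (Fin.revPerm : Equiv.Perm (Fin d)) id).det ≠ 0 := by
    rw [Matrix.det_of_lowerTriangular _ ?_]
    · rw [Finset.prod_ne_zero_iff]
      intro i _
      exact hdiag_ne i
    · intro i k hik
      exact hzero i k hik
  intro hdet
  rw [Matrix.det_permute, hdet, mul_zero] at hdet'
  exact hdet' rfl
end

section
/- Let δ be a locally nilpotent ℂ-derivation of ℂ[x₁,…,xₙ] with δ^{d+1} x_j = 0 for all j, where d ≥ 1, let θ be the induced flow on ℂⁿ, and fix an index j. Set V := {p ∈ ℂⁿ : (δ^d x_j)(p) ≠ 0} and S := {p ∈ V : (δ^{d−1} x_j)(p) = 0}. Then the map Φ : ℂ × S → V, Φ(t, s) := θ_t(s), is a homeomorphism onto V (where S carries the subspace topology); its inverse is p ↦ (t(p), θ_{−t(p)}(p)) with t(p) := (δ^{d−1} x_j)(p) / (δ^d x_j)(p). In particular S is a local slice for the ℂ-action on V. -/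
open MvPolynomial

/-- The flow `θ_t(p)` on `ℂⁿ` induced by a locally nilpotent derivation `δ`:
`(θ_t(p))_k := Σ_{m≥0} (t^m/m!) (δ^m x_k)(p)` (a finite sum by local nilpotency). -/
noncomputable def flow {n : ℕ}
    (δ : Derivation ℂ (MvPolynomial (Fin n) ℂ) (MvPolynomial (Fin n) ℂ))
    (t : ℂ) (p : Fin n → ℂ) : Fin n → ℂ :=
  fun k => ∑ᶠ m : ℕ, (t ^ m / (m.factorial : ℂ)) * eval p ((⇑δ)^[m] (X k))


open MvPolynomial Finset Finset.Nat

section Aux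
variable {n : ℕ} (δ : Derivation ℂ (MvPolynomial (Fin n) ℂ) (MvPolynomial (Fin n) ℂ))

lemma iterZero (m : ℕ) : (⇑δ)^[m] (0 : MvPolynomial (Fin n) ℂ) = 0 :=
  Function.iterate_fixed (map_zero δ) m

lemma iterStable {f : MvPolynomial (Fin n) ℂ} {N m : ℕ} (hN : (⇑δ)^[N] f = 0) (h : N ≤ m) :
    (⇑δ)^[m] f = 0 := by
  obtain ⟨k, rfl⟩ := Nat.exists_eq_add_of_le h
  rw [Nat.add_comm, Function.iterate_add_apply, hN, iterZero]

lemma iterLeibniz (m : ℕ) (a b : MvPolynomial (Fin n) ℂ) :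
    (⇑δ)^[m] (a * b) =
      ∑ ij ∈ Finset.HasAntidiagonal.antidiagonal m,
        m.choose ij.1 • ((⇑δ)^[ij.1] a * (⇑δ)^[ij.2] b) := by
  induction m with
  | zero => simp
  | succ m ih =>
    rw [Finset.sum_antidiagonal_choose_succ_nsmul
      (fun i j => (⇑δ)^[i] a * (⇑δ)^[j] b) m]
    simp only [Function.iterate_succ_apply', ih, map_sum, map_nsmul, Derivation.leibniz,
      smul_eq_mul, smul_add, Finset.sum_add_distrib, add_right_inj]
    refine Finset.sum_congr rfl fun ⟨i, j⟩ hij ↦ ?_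
    rw [m.choose_symm_of_eq_add (Finset.HasAntidiagonal.mem_antidiagonal.1 hij).symm]
    ring_nf

lemma iterLeibniz' (m : ℕ) (a b : MvPolynomial (Fin n) ℂ) :
    (⇑δ)^[m] (a * b) =
      ∑ k ∈ Finset.range (m + 1), m.choose k • ((⇑δ)^[k] a * (⇑δ)^[m - k] b) := by
  rw [iterLeibniz]
  exact Finset.Nat.sum_antidiagonal_eq_sum_range_succ
    (fun i j => m.choose i • ((⇑δ)^[i] a * (⇑δ)^[j] b)) m

end Aux


open MvPolynomial Finset

lemma diagSum (F : ℕ → ℕ → ℂ) (N : ℕ) (h1 : ∀ i j, N ≤ i → F i j = 0)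
    (h2 : ∀ i j, N ≤ j → F i j = 0) :
    ∑ m ∈ range (2 * N), ∑ k ∈ range (m + 1), F k (m - k)
      = ∑ i ∈ range N, ∑ j ∈ range N, F i j := by
  rw [Finset.sum_range_diag_flip]
  rw [← Finset.sum_subset (show range N ⊆ range (2 * N) from range_subset_range.2 (by omega))
    (fun m _ hm => Finset.sum_eq_zero fun k _ => h1 m k (by simpa using hm))]
  refine Finset.sum_congr rfl fun m hm => ?_
  have hmN : m < N := mem_range.1 hm
  refine (Finset.sum_subset (show range N ⊆ range (2 * N - m) from range_subset_range.2 (by omega))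
    fun k _ hk => h2 m k (by simpa using hk)).symm

lemma cauchySum (u v : ℕ → ℂ) (N : ℕ) (hu : ∀ i, N ≤ i → u i = 0) (hv : ∀ i, N ≤ i → v i = 0) :
    ∑ m ∈ range (2 * N), ∑ k ∈ range (m + 1), u k * v (m - k)
      = (∑ i ∈ range N, u i) * (∑ j ∈ range N, v j) := by
  rw [diagSum (fun i j => u i * v j) N (fun i j hi => by simp [hu i hi])
    (fun i j hj => by simp [hv j hj]), Finset.sum_mul_sum]

lemma chooseId {m k : ℕ} (hk : k ≤ m) (t : ℂ) :
    t ^ m / (m.factorial : ℂ) * (m.choose k : ℂ)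
      = (t ^ k / (k.factorial : ℂ)) * (t ^ (m - k) / ((m - k).factorial : ℂ)) := by
  have h := Nat.choose_mul_factorial_mul_factorial hk
  have hc : (m.choose k : ℂ) * (k.factorial : ℂ) * ((m - k).factorial : ℂ)
      = (m.factorial : ℂ) := by exact_mod_cast congrArg (Nat.cast (R := ℂ)) h
  have h1 : (k.factorial : ℂ) ≠ 0 := Nat.cast_ne_zero.2 k.factorial_ne_zero
  have h2 : ((m - k).factorial : ℂ) ≠ 0 := Nat.cast_ne_zero.2 (m - k).factorial_ne_zero
  have h3 : (m.factorial : ℂ) ≠ 0 := Nat.cast_ne_zero.2 m.factorial_ne_zero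
  field_simp
  rw [mul_assoc (m.factorial : ℂ), ← pow_add, Nat.add_sub_cancel' hk]
  linear_combination t ^ m * hc

section Exp
variable {n : ℕ} (δ : Derivation ℂ (MvPolynomial (Fin n) ℂ) (MvPolynomial (Fin n) ℂ))

lemma finsumExp {f : MvPolynomial (Fin n) ℂ} {N : ℕ} (hN : (⇑δ)^[N] f = 0)
    (t : ℂ) (p : Fin n → ℂ) :
    ∑ᶠ m : ℕ, (t ^ m / (m.factorial : ℂ)) * eval p ((⇑δ)^[m] f)
      = ∑ m ∈ range N, (t ^ m / (m.factorial : ℂ)) * eval p ((⇑δ)^[m] f) := by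
  refine finsum_eq_sum_of_support_subset _ fun m hm => ?_
  simp only [Function.mem_support] at hm
  simp only [Finset.coe_range, Set.mem_Iio]
  by_contra hmN
  exact hm (by rw [iterStable δ hN (by omega), map_zero, mul_zero])

lemma expMul (hln : ∀ f : MvPolynomial (Fin n) ℂ, ∃ N : ℕ, (⇑δ)^[N] f = 0)
    (t : ℂ) (p : Fin n → ℂ) (f g : MvPolynomial (Fin n) ℂ) :
    ∑ᶠ m : ℕ, (t ^ m / (m.factorial : ℂ)) * eval p ((⇑δ)^[m] (f * g))
      = (∑ᶠ m : ℕ, (t ^ m / (m.factorial : ℂ)) * eval p ((⇑δ)^[m] f))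
        * ∑ᶠ m : ℕ, (t ^ m / (m.factorial : ℂ)) * eval p ((⇑δ)^[m] g) := by
  obtain ⟨Nf, hNf⟩ := hln f
  obtain ⟨Ng, hNg⟩ := hln g
  set N := max Nf Ng with hNdef
  have hf : (⇑δ)^[N] f = 0 := iterStable δ hNf (le_max_left _ _)
  have hg : (⇑δ)^[N] g = 0 := iterStable δ hNg (le_max_right _ _)
  have hfg : (⇑δ)^[2 * N] (f * g) = 0 := by
    rw [iterLeibniz']
    refine Finset.sum_eq_zero fun k hk => ?_
    rcases le_or_gt N k with h | h
    · rw [iterStable δ hf h, zero_mul, smul_zero]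
    · rw [iterStable δ hg (by omega), mul_zero, smul_zero]
  rw [finsumExp δ hfg, finsumExp δ hf, finsumExp δ hg]
  rw [← cauchySum (fun k => (t ^ k / (k.factorial : ℂ)) * eval p ((⇑δ)^[k] f))
      (fun k => (t ^ k / (k.factorial : ℂ)) * eval p ((⇑δ)^[k] g)) N
      (fun i hi => by simp [iterStable δ hf hi])
      (fun i hi => by simp [iterStable δ hg hi])]
  refine Finset.sum_congr rfl fun m _ => ?_
  rw [iterLeibniz', map_sum, Finset.mul_sum]
  refine Finset.sum_congr rfl fun k hk => ?_
  have hkm : k ≤ m := by simpa [Nat.lt_succ_iff] using hk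
  rw [map_nsmul, nsmul_eq_mul, map_mul]
  rw [show t ^ k / (k.factorial : ℂ) * eval p ((⇑δ)^[k] f)
        * (t ^ (m - k) / ((m - k).factorial : ℂ) * eval p ((⇑δ)^[m - k] g))
      = (t ^ k / (k.factorial : ℂ) * (t ^ (m - k) / ((m - k).factorial : ℂ)))
        * (eval p ((⇑δ)^[k] f) * eval p ((⇑δ)^[m - k] g)) by ring]
  rw [← chooseId hkm t]
  ring

lemma evalFlow (hln : ∀ f : MvPolynomial (Fin n) ℂ, ∃ N : ℕ, (⇑δ)^[N] f = 0)
    (t : ℂ) (p : Fin n → ℂ) (f : MvPolynomial (Fin n) ℂ) :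
    eval (flow δ t p) f = ∑ᶠ m : ℕ, (t ^ m / (m.factorial : ℂ)) * eval p ((⇑δ)^[m] f) := by
  induction f using MvPolynomial.induction_on with
  | C a =>
    have h1 : (⇑δ)^[1] (C a : MvPolynomial (Fin n) ℂ) = 0 := by
      simp only [Function.iterate_one]
      rw [show (C a : MvPolynomial (Fin n) ℂ) = algebraMap ℂ _ a from rfl]
      exact Derivation.map_algebraMap δ a
    rw [finsumExp δ h1, Finset.sum_range_one]
    simp
  | add f g hf hg =>
    obtain ⟨Nf, hNf⟩ := hln f
    obtain ⟨Ng, hNg⟩ := hln g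
    have hf' : (⇑δ)^[max Nf Ng] f = 0 := iterStable δ hNf (le_max_left _ _)
    have hg' : (⇑δ)^[max Nf Ng] g = 0 := iterStable δ hNg (le_max_right _ _)
    have hfg : (⇑δ)^[max Nf Ng] (f + g) = 0 := by
      rw [iterate_map_add, hf', hg', add_zero]
    rw [map_add, hf, hg, finsumExp δ hfg, finsumExp δ hf', finsumExp δ hg',
      ← Finset.sum_add_distrib]
    exact Finset.sum_congr rfl fun m _ => by rw [iterate_map_add, map_add]; ring
  | mul_X f k hf =>
    rw [map_mul, hf, expMul δ hln]
    rw [eval_X]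
    rfl

end Exp

section Flow
variable {n d : ℕ} (δ : Derivation ℂ (MvPolynomial (Fin n) ℂ) (MvPolynomial (Fin n) ℂ))

lemma flowZero (hdeg : ∀ j : Fin n, (⇑δ)^[d + 1] (X j) = 0) (p : Fin n → ℂ) :
    flow δ 0 p = p := by
  funext k
  show ∑ᶠ m : ℕ, ((0 : ℂ) ^ m / (m.factorial : ℂ)) * eval p ((⇑δ)^[m] (X k)) = p k
  rw [finsumExp δ (hdeg k)]
  rw [Finset.sum_eq_single 0]
  · simp
  · intro m _ hm
    rw [zero_pow hm, zero_div, zero_mul]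
  · intro h
    exact absurd (Finset.mem_range.2 (by omega)) h

lemma flowAdd (hln : ∀ f : MvPolynomial (Fin n) ℂ, ∃ N : ℕ, (⇑δ)^[N] f = 0)
    (hdeg : ∀ j : Fin n, (⇑δ)^[d + 1] (X j) = 0) (s t : ℂ) (p : Fin n → ℂ) :
    flow δ s (flow δ t p) = flow δ (s + t) p := by
  funext k
  set N := d + 1 with hN
  have hX : ∀ i : ℕ, N ≤ i → (⇑δ)^[i] (X k : MvPolynomial (Fin n) ℂ) = 0 :=
    fun i hi => iterStable δ (hdeg k) hi
  have hiter : ∀ i : ℕ, (⇑δ)^[N] ((⇑δ)^[i] (X k : MvPolynomial (Fin n) ℂ)) = 0 := by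
    intro i
    rw [← Function.iterate_add_apply]
    exact hX _ (by omega)
  show ∑ᶠ m : ℕ, (s ^ m / (m.factorial : ℂ)) * eval (flow δ t p) ((⇑δ)^[m] (X k))
      = ∑ᶠ m : ℕ, ((s + t) ^ m / (m.factorial : ℂ)) * eval p ((⇑δ)^[m] (X k))
  rw [finsumExp δ (hdeg k), finsumExp δ (hdeg k)]
  have lhs_eq : ∀ m ∈ Finset.range N,
      (s ^ m / (m.factorial : ℂ)) * eval (flow δ t p) ((⇑δ)^[m] (X k))
        = ∑ r ∈ Finset.range N, (s ^ m / (m.factorial : ℂ)) *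
            ((t ^ r / (r.factorial : ℂ)) * eval p ((⇑δ)^[m + r] (X k))) := by
    intro m _
    rw [evalFlow δ hln, finsumExp δ (hiter m), Finset.mul_sum]
    refine Finset.sum_congr rfl fun r _ => ?_
    rw [← Function.iterate_add_apply, Nat.add_comm r m]
  rw [Finset.sum_congr rfl lhs_eq]
  have rhs_eq : ∑ m ∈ Finset.range N, ((s + t) ^ m / (m.factorial : ℂ)) * eval p ((⇑δ)^[m] (X k))
      = ∑ m ∈ Finset.range (2 * N), ((s + t) ^ m / (m.factorial : ℂ)) * eval p ((⇑δ)^[m] (X k)) := by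
    refine Finset.sum_subset (Finset.range_subset_range.2 (by omega)) fun m _ hm => ?_
    rw [hX m (by simpa using hm), map_zero, mul_zero]
  rw [rhs_eq]
  have expand : ∀ m ∈ Finset.range (2 * N),
      ((s + t) ^ m / (m.factorial : ℂ)) * eval p ((⇑δ)^[m] (X k))
        = ∑ i ∈ Finset.range (m + 1),
            (fun a b => (s ^ a / (a.factorial : ℂ)) *
              ((t ^ b / (b.factorial : ℂ)) * eval p ((⇑δ)^[a + b] (X k)))) i (m - i) := by
    intro m _
    rw [add_pow, Finset.sum_div, Finset.sum_mul]
    refine Finset.sum_congr rfl fun i hi => ?_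
    have him : i ≤ m := by simpa [Nat.lt_succ_iff] using hi
    simp only
    rw [Nat.add_sub_cancel' him]
    have : s ^ i * t ^ (m - i) * (m.choose i : ℂ) / (m.factorial : ℂ)
        = (s ^ i * t ^ (m - i)) * ((m.choose i : ℂ) / (m.factorial : ℂ)) := by ring
    rw [this]
    have h2 := chooseId him (1 : ℂ)
    simp only [one_pow] at h2
    rw [show (1:ℂ) / (m.factorial : ℂ) * (m.choose i : ℂ)
        = (m.choose i : ℂ) / (m.factorial : ℂ) by ring] at h2
    rw [h2]
    ring
  rw [Finset.sum_congr rfl expand]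
  have final := diagSum
    (fun a b => (s ^ a / (a.factorial : ℂ)) *
      ((t ^ b / (b.factorial : ℂ)) * eval p ((⇑δ)^[a + b] (X k)))) N
    (fun a b ha => by simp [hX (a+b) (by omega)])
    (fun a b hb => by simp [hX (a+b) (by omega)])
  simpa using final.symm

end Flow

section Main
variable {n d : ℕ} (δ : Derivation ℂ (MvPolynomial (Fin n) ℂ) (MvPolynomial (Fin n) ℂ))

lemma evalFlowTop (hln : ∀ f : MvPolynomial (Fin n) ℂ, ∃ N : ℕ, (⇑δ)^[N] f = 0)
    (hdeg : ∀ j : Fin n, (⇑δ)^[d + 1] (X j) = 0) (j : Fin n) (t : ℂ) (p : Fin n → ℂ) :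
    eval (flow δ t p) ((⇑δ)^[d] (X j)) = eval p ((⇑δ)^[d] (X j)) := by
  have h1 : (⇑δ)^[1] ((⇑δ)^[d] (X j : MvPolynomial (Fin n) ℂ)) = 0 := by
    rw [← Function.iterate_add_apply]
    simpa [Nat.add_comm] using hdeg j
  rw [evalFlow δ hln, finsumExp δ h1, Finset.sum_range_one]
  simp

lemma evalFlowSub (hd1 : 1 ≤ d)
    (hln : ∀ f : MvPolynomial (Fin n) ℂ, ∃ N : ℕ, (⇑δ)^[N] f = 0)
    (hdeg : ∀ j : Fin n, (⇑δ)^[d + 1] (X j) = 0) (j : Fin n) (t : ℂ) (p : Fin n → ℂ) :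
    eval (flow δ t p) ((⇑δ)^[d - 1] (X j))
      = eval p ((⇑δ)^[d - 1] (X j)) + t * eval p ((⇑δ)^[d] (X j)) := by
  have h2 : (⇑δ)^[2] ((⇑δ)^[d - 1] (X j : MvPolynomial (Fin n) ℂ)) = 0 := by
    rw [← Function.iterate_add_apply, show 2 + (d - 1) = d + 1 by omega]
    exact hdeg j
  have h1 : (⇑δ)^[1] ((⇑δ)^[d - 1] (X j : MvPolynomial (Fin n) ℂ))
      = (⇑δ)^[d] (X j) := by
    rw [← Function.iterate_add_apply, show 1 + (d - 1) = d by omega]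
  rw [evalFlow δ hln, finsumExp δ h2, Finset.sum_range_succ, Finset.sum_range_one, h1]
  simp

lemma flowContinuous (hdeg : ∀ j : Fin n, (⇑δ)^[d + 1] (X j) = 0) :
    Continuous (fun q : ℂ × (Fin n → ℂ) => flow δ q.1 q.2) := by
  apply continuous_pi
  intro k
  have : (fun q : ℂ × (Fin n → ℂ) => flow δ q.1 q.2 k)
      = fun q : ℂ × (Fin n → ℂ) =>
          ∑ m ∈ Finset.range (d + 1),
            (q.1 ^ m / (m.factorial : ℂ)) * eval q.2 ((⇑δ)^[m] (X k)) := by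
    funext q
    exact finsumExp δ (hdeg k) q.1 q.2
  rw [this]
  apply continuous_finset_sum
  intro m _
  exact ((continuous_fst.pow m).div_const _).mul
    ((MvPolynomial.continuous_eval _).comp continuous_snd)

end Main

/-- With `V := {p : (δ^d x_j)(p) ≠ 0}` and
`S := {p ∈ V : (δ^{d−1} x_j)(p) = 0}`, the map `Φ(t,s) := θ_t(s)` is a homeomorphism from
`ℂ × S` onto `V` with inverse `p ↦ (t(p), θ_{−t(p)}(p))`, `t(p) := (δ^{d−1}x_j)(p)/(δ^d x_j)(p)`.
In particular `S` is a local slice for the `ℂ`-action on `V`. -/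
theorem slice_homeomorphism_on_generic_chart
    {n d : ℕ} (hd1 : 1 ≤ d)
    (δ : Derivation ℂ (MvPolynomial (Fin n) ℂ) (MvPolynomial (Fin n) ℂ))
    (hln : ∀ f : MvPolynomial (Fin n) ℂ, ∃ N : ℕ, (⇑δ)^[N] f = 0)
    (hdeg : ∀ j : Fin n, (⇑δ)^[d + 1] (X j) = 0) (j : Fin n) :
    ∃ Φ : (ℂ × {p : Fin n → ℂ //
          eval p ((⇑δ)^[d] (X j)) ≠ 0 ∧ eval p ((⇑δ)^[d - 1] (X j)) = 0}) ≃ₜ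
        {p : Fin n → ℂ // eval p ((⇑δ)^[d] (X j)) ≠ 0},
      (∀ ts : ℂ × {p : Fin n → ℂ //
          eval p ((⇑δ)^[d] (X j)) ≠ 0 ∧ eval p ((⇑δ)^[d - 1] (X j)) = 0},
        (Φ ts : Fin n → ℂ) = flow δ ts.1 (ts.2 : Fin n → ℂ)) ∧
      (∀ q : {p : Fin n → ℂ // eval p ((⇑δ)^[d] (X j)) ≠ 0},
        (Φ.symm q).1
            = eval (q : Fin n → ℂ) ((⇑δ)^[d - 1] (X j))
              / eval (q : Fin n → ℂ) ((⇑δ)^[d] (X j)) ∧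
        ((Φ.symm q).2 : Fin n → ℂ)
            = flow δ (-(eval (q : Fin n → ℂ) ((⇑δ)^[d - 1] (X j))
                / eval (q : Fin n → ℂ) ((⇑δ)^[d] (X j)))) (q : Fin n → ℂ)) := by
  have hinv := evalFlowTop δ hln hdeg j
  have haff := evalFlowSub δ hd1 hln hdeg j
  have hzero := flowZero δ hdeg
  have hadd := flowAdd δ hln hdeg
  refine ⟨{
    toEquiv := {
      toFun := fun ts => ⟨flow δ ts.1 ts.2.1, by rw [hinv]; exact ts.2.2.1⟩
      invFun := fun q =>
        ⟨eval q.1 ((⇑δ)^[d - 1] (X j)) / eval q.1 ((⇑δ)^[d] (X j)),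
         ⟨flow δ (-(eval q.1 ((⇑δ)^[d - 1] (X j)) / eval q.1 ((⇑δ)^[d] (X j)))) q.1,
          by rw [hinv]; exact q.2,
          by
            have h := q.2
            rw [haff]
            field_simp
            ring⟩⟩
      left_inv := by
        rintro ⟨t, s⟩
        have hgs : eval s.1 ((⇑δ)^[d] (X j)) ≠ 0 := s.2.1
        have hQ : eval s.1 ((⇑δ)^[d - 1] (X j)) = 0 := s.2.2
        have ht : eval (flow δ t s.1) ((⇑δ)^[d - 1] (X j))
            / eval (flow δ t s.1) ((⇑δ)^[d] (X j)) = t := by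
          rw [haff, hinv, hQ, zero_add, mul_div_cancel_right₀ _ hgs]
        refine Prod.ext ht (Subtype.ext ?_)
        show flow δ _ (flow δ t s.1) = s.1
        rw [ht, hadd, neg_add_cancel, hzero]
      right_inv := by
        intro q
        refine Subtype.ext ?_
        show flow δ _ (flow δ _ q.1) = q.1
        rw [hadd, add_neg_cancel, hzero] }
    continuous_toFun := by
      apply Continuous.subtype_mk
      exact (flowContinuous δ hdeg).comp
        (continuous_fst.prodMk (continuous_subtype_val.comp continuous_snd))
    continuous_invFun := by
      have hτ : Continuous fun q : {p : Fin n → ℂ // eval p ((⇑δ)^[d] (X j)) ≠ 0} =>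
          eval q.1 ((⇑δ)^[d - 1] (X j)) / eval q.1 ((⇑δ)^[d] (X j)) :=
        ((MvPolynomial.continuous_eval _).comp continuous_subtype_val).div
          ((MvPolynomial.continuous_eval _).comp continuous_subtype_val) (fun q => q.2)
      refine Continuous.prodMk hτ ?_
      apply Continuous.subtype_mk
      exact (flowContinuous δ hdeg).comp (hτ.neg.prodMk continuous_subtype_val)
    }, fun ts => rfl, fun q => ⟨rfl, rfl⟩⟩
end

section
/- Let δ be a locally nilpotent ℂ-derivation of ℂ[x₁,…,xₙ] with δ^{d+1} x_j = 0 for all j, where d ≥ 1, let θ be the induced flow on ℂⁿ, and let U₀ := {p ∈ ℂⁿ : (δ^d x_j)(p) ≠ 0 for some j}. Then U₀ is open and θ-invariant, and the restricted action of (ℂ,+) on U₀ is proper: the map ℂ × U₀ → U₀ × U₀, (t, p) ↦ (p, θ_t(p)), is a proper map, i.e., the preimage of every compact set is compact. -/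
open MvPolynomial

namespace FlowProperAux

open Finset

variable {n : ℕ} (δ : Derivation ℂ (MvPolynomial (Fin n) ℂ) (MvPolynomial (Fin n) ℂ))
  (t : ℂ) (p : Fin n → ℂ)

/-- The "exponential evaluation" `E f = Σ_m (t^m/m!) (δ^m f)(p)`. -/
noncomputable def E (f : MvPolynomial (Fin n) ℂ) : ℂ :=
  ∑ᶠ m : ℕ, (t ^ m / (m.factorial : ℂ)) * eval p ((⇑δ)^[m] f)

/-- Truncated version of `E`. -/
noncomputable def S (M : ℕ) (f : MvPolynomial (Fin n) ℂ) : ℂ :=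
  ∑ m ∈ range M, (t ^ m / (m.factorial : ℂ)) * eval p ((⇑δ)^[m] f)

lemma flow_apply (k : Fin n) : flow δ t p k = E δ t p (X k) := rfl

variable {δ}

lemma iter_zero_of_le {a m : ℕ} {f : MvPolynomial (Fin n) ℂ}
    (h : (⇑δ)^[a] f = 0) (ham : a ≤ m) : (⇑δ)^[m] f = 0 := by
  obtain ⟨k, rfl⟩ := Nat.exists_eq_add_of_le ham
  rw [Nat.add_comm, Function.iterate_add_apply, h]
  exact Function.iterate_fixed (map_zero δ) k

lemma E_eq_S {a M : ℕ} {f : MvPolynomial (Fin n) ℂ}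
    (h : (⇑δ)^[a] f = 0) (haM : a ≤ M) : E δ t p f = S δ t p M f := by
  apply finsum_eq_sum_of_support_subset
  intro m hm
  simp only [Function.mem_support, Set.mem_setOf_eq] at hm
  simp only [Finset.coe_range, Set.mem_Iio]
  by_contra hmM
  push_neg at hmM
  rw [iter_zero_of_le h (le_trans haM hmM)] at hm
  simp at hm

lemma iter_add (m : ℕ) (f g : MvPolynomial (Fin n) ℂ) :
    (⇑δ)^[m] (f + g) = (⇑δ)^[m] f + (⇑δ)^[m] g := by
  induction m with
  | zero => simp
  | succ m ih => simp [Function.iterate_succ_apply', ih, map_add]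

/-- Iterated Leibniz rule (antidiagonal form). -/
lemma iterate_mul_antidiagonal (m : ℕ) (f g : MvPolynomial (Fin n) ℂ) :
    (⇑δ)^[m] (f * g) =
      ∑ ij ∈ Finset.HasAntidiagonal.antidiagonal m,
        m.choose ij.1 • ((⇑δ)^[ij.1] f * (⇑δ)^[ij.2] g) := by
  induction m with
  | zero => simp
  | succ m ih =>
    rw [Finset.sum_antidiagonal_choose_succ_nsmul
      (fun i j => (⇑δ)^[i] f * (⇑δ)^[j] g) m]
    simp only [Function.iterate_succ_apply', ih, map_sum, map_nsmul, Derivation.leibniz,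
      smul_eq_mul, smul_add, Finset.sum_add_distrib, add_right_inj]
    refine Finset.sum_congr rfl fun ij hij => ?_
    rw [Nat.choose_symm_of_eq_add (Finset.HasAntidiagonal.mem_antidiagonal.1 hij).symm, mul_comm]

/-- Iterated Leibniz rule (range form). -/
lemma iterate_mul (m : ℕ) (f g : MvPolynomial (Fin n) ℂ) :
    (⇑δ)^[m] (f * g) =
      ∑ i ∈ range (m + 1), m.choose i • ((⇑δ)^[i] f * (⇑δ)^[m - i] g) := by
  rw [iterate_mul_antidiagonal]
  exact Finset.Nat.sum_antidiagonal_eq_sum_range_succ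
    (fun i j => m.choose i • ((⇑δ)^[i] f * (⇑δ)^[j] g)) m

lemma iter_mul_zero {a b : ℕ} {f g : MvPolynomial (Fin n) ℂ}
    (ha : (⇑δ)^[a] f = 0) (hb : (⇑δ)^[b] g = 0) : (⇑δ)^[a + b] (f * g) = 0 := by
  rw [iterate_mul]
  apply Finset.sum_eq_zero
  intro i hi
  rcases le_or_gt a i with h | h
  · rw [iter_zero_of_le ha h, zero_mul, smul_zero]
  · have : b ≤ a + b - i := by omega
    rw [iter_zero_of_le hb this, mul_zero, smul_zero]

lemma cauchy (u v : ℕ → ℂ) (M : ℕ) (hvan : ∀ i j, M ≤ i + j → u i * v j = 0) :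
    ∑ m ∈ range M, ∑ i ∈ range (m + 1), u i * v (m - i)
      = (∑ i ∈ range M, u i) * (∑ j ∈ range M, v j) := by
  classical
  rw [Finset.sum_mul_sum, ← Finset.sum_product']
  rw [Finset.sum_sigma']
  rw [← Finset.sum_filter_of_ne
    (p := fun x : ℕ × ℕ => x.1 + x.2 < M)
    (fun x _ hx => by by_contra hc; exact hx (hvan x.1 x.2 (Nat.le_of_not_lt hc)))]
  refine Finset.sum_nbij' (fun x => (x.2, x.1 - x.2)) (fun y => ⟨y.1 + y.2, y.1⟩)
    ?_ ?_ ?_ ?_ (fun x _ => rfl)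
  · rintro ⟨m, i⟩ hx
    simp only [Finset.mem_sigma, Finset.mem_range] at hx
    simp only [Finset.mem_filter, Finset.mem_product, Finset.mem_range]
    omega
  · rintro ⟨i, j⟩ hy
    simp only [Finset.mem_filter, Finset.mem_product, Finset.mem_range] at hy
    simp only [Finset.mem_sigma, Finset.mem_range]
    omega
  · rintro ⟨m, i⟩ hx
    simp only [Finset.mem_sigma, Finset.mem_range] at hx
    have him : i ≤ m := by omega
    simp [Nat.add_sub_cancel' him]
  · rintro ⟨i, j⟩ hy
    simp

lemma coeff_split (t : ℂ) {i k : ℕ} :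
    t ^ (i + k) / ((i + k).factorial : ℂ) * ((i + k).choose i : ℂ)
      = (t ^ i / (i.factorial : ℂ)) * (t ^ k / (k.factorial : ℂ)) := by
  have h1 : ((i.factorial : ℂ)) ≠ 0 := Nat.cast_ne_zero.mpr (Nat.factorial_ne_zero i)
  have h2 : ((k.factorial : ℂ)) ≠ 0 := Nat.cast_ne_zero.mpr (Nat.factorial_ne_zero k)
  have h3 : (((i + k).factorial : ℂ)) ≠ 0 := Nat.cast_ne_zero.mpr (Nat.factorial_ne_zero _)
  rw [Nat.cast_add_choose, pow_add]
  field_simp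

lemma E_mul {a b : ℕ} {f g : MvPolynomial (Fin n) ℂ}
    (ha : (⇑δ)^[a] f = 0) (hb : (⇑δ)^[b] g = 0) :
    E δ t p (f * g) = E δ t p f * E δ t p g := by
  have hfg : (⇑δ)^[a + b] (f * g) = 0 := iter_mul_zero ha hb
  rw [E_eq_S t p hfg le_rfl, E_eq_S t p ha (Nat.le_add_right a b),
    E_eq_S t p hb (Nat.le_add_left b a)]
  unfold S
  rw [← cauchy (fun i => t ^ i / (i.factorial : ℂ) * eval p ((⇑δ)^[i] f))
      (fun j => t ^ j / (j.factorial : ℂ) * eval p ((⇑δ)^[j] g)) (a + b)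
      (fun i j hij => by
        rcases le_or_gt a i with h | h
        · simp only [iter_zero_of_le ha h, map_zero, mul_zero, zero_mul]
        · have hbj : b ≤ j := by omega
          simp only [iter_zero_of_le hb hbj, map_zero, mul_zero, zero_mul])]
  refine Finset.sum_congr rfl fun m _ => ?_
  rw [iterate_mul]
  rw [map_sum]
  rw [Finset.mul_sum]
  refine Finset.sum_congr rfl fun i hi => ?_
  have him : i ≤ m := by
    simp only [Finset.mem_range] at hi; omega
  obtain ⟨k, rfl⟩ : ∃ k, m = i + k := ⟨m - i, by omega⟩
  have hik : i + k - i = k := by omega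
  rw [hik]
  rw [map_nsmul, map_mul, nsmul_eq_mul]
  linear_combination (eval p ((⇑δ)^[i] f) * eval p ((⇑δ)^[k] g)) * coeff_split t (i := i) (k := k)

lemma E_add {a b : ℕ} {f g : MvPolynomial (Fin n) ℂ}
    (ha : (⇑δ)^[a] f = 0) (hb : (⇑δ)^[b] g = 0) :
    E δ t p (f + g) = E δ t p f + E δ t p g := by
  have hM : (⇑δ)^[max a b] (f + g) = 0 := by
    rw [iter_add, iter_zero_of_le ha (le_max_left a b),
      iter_zero_of_le hb (le_max_right a b), add_zero]
  rw [E_eq_S t p hM le_rfl, E_eq_S t p ha (le_max_left a b),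
    E_eq_S t p hb (le_max_right a b)]
  unfold S
  rw [← Finset.sum_add_distrib]
  refine Finset.sum_congr rfl fun m _ => ?_
  rw [iter_add, map_add, mul_add]

lemma E_C (a : ℂ) : E δ t p (C a : MvPolynomial (Fin n) ℂ) = a := by
  have h1 : (⇑δ)^[1] (C a : MvPolynomial (Fin n) ℂ) = 0 := by
    rw [Function.iterate_one]
    rw [show (C a : MvPolynomial (Fin n) ℂ) = algebraMap ℂ _ a from rfl]
    exact Derivation.map_algebraMap δ a
  rw [E_eq_S t p h1 le_rfl]
  simp [S]

/-- `eval` along the flow equals the exponential evaluation. -/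
lemma eval_flow (hln : ∀ f : MvPolynomial (Fin n) ℂ, ∃ N : ℕ, (⇑δ)^[N] f = 0)
    (f : MvPolynomial (Fin n) ℂ) :
    eval (flow δ t p) f = E δ t p f := by
  induction f using MvPolynomial.induction_on with
  | C a => rw [eval_C, E_C]
  | add f g hf hg =>
    obtain ⟨a, ha⟩ := hln f
    obtain ⟨b, hb⟩ := hln g
    rw [map_add, hf, hg, E_add t p ha hb]
  | mul_X f k hf =>
    obtain ⟨a, ha⟩ := hln f
    obtain ⟨b, hb⟩ := hln (X k)
    rw [map_mul, hf, eval_X, E_mul t p ha hb, flow_apply]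

/-- The flow preserves the values of `δ^d x_j`. -/
lemma eval_flow_iter (hln : ∀ f : MvPolynomial (Fin n) ℂ, ∃ N : ℕ, (⇑δ)^[N] f = 0)
    (d : ℕ) (j : Fin n) (hdeg : (⇑δ)^[d + 1] (X j) = 0) :
    eval (flow δ t p) ((⇑δ)^[d] (X j)) = eval p ((⇑δ)^[d] (X j)) := by
  rw [eval_flow t p hln]
  have h1 : (⇑δ)^[1] ((⇑δ)^[d] (X j : MvPolynomial (Fin n) ℂ)) = 0 := by
    rw [← Function.iterate_add_apply]
    rw [show 1 + d = d + 1 from Nat.add_comm 1 d]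
    exact hdeg
  rw [E_eq_S t p h1 le_rfl]
  simp [S]

/-- The flow as a finite sum (given the degree bound). -/
lemma flow_eq_sum {d : ℕ} (hdeg : ∀ j : Fin n, (⇑δ)^[d + 1] (X j) = 0) (k : Fin n) :
    flow δ t p k
      = ∑ m ∈ range (d + 1), (t ^ m / (m.factorial : ℂ)) * eval p ((⇑δ)^[m] (X k)) := by
  rw [flow_apply, E_eq_S t p (hdeg k) le_rfl]
  rfl

lemma flow_continuous {d : ℕ} (hdeg : ∀ j : Fin n, (⇑δ)^[d + 1] (X j) = 0) :
    Continuous (fun tp : ℂ × (Fin n → ℂ) => flow δ tp.1 tp.2) := by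
  apply continuous_pi
  intro k
  have : (fun tp : ℂ × (Fin n → ℂ) => flow δ tp.1 tp.2 k)
      = fun tp : ℂ × (Fin n → ℂ) =>
        ∑ m ∈ range (d + 1), (tp.1 ^ m / (m.factorial : ℂ)) * eval tp.2 ((⇑δ)^[m] (X k)) :=
    funext fun tp => flow_eq_sum tp.1 tp.2 hdeg k
  rw [this]
  apply continuous_finset_sum
  intro m _
  exact ((continuous_fst.pow m).div_const _).mul
    ((MvPolynomial.continuous_eval _).comp continuous_snd)

end FlowProperAux

open FlowProperAux Finset

/-- `U₀ := {p : (δ^d x_j)(p) ≠ 0 for some j}` is open and `θ`-invariant,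
and the restricted action of `(ℂ,+)` on `U₀` is proper: the map `(t,p) ↦ (p, θ_t(p))` from
`ℂ × U₀` to `U₀ × U₀` has compact preimages of compact sets. -/
theorem restricted_action_on_generic_set_is_proper
    {n d : ℕ} (hd1 : 1 ≤ d)
    (δ : Derivation ℂ (MvPolynomial (Fin n) ℂ) (MvPolynomial (Fin n) ℂ))
    (hln : ∀ f : MvPolynomial (Fin n) ℂ, ∃ N : ℕ, (⇑δ)^[N] f = 0)
    (hdeg : ∀ j : Fin n, (⇑δ)^[d + 1] (X j) = 0) :
    IsOpen {p : Fin n → ℂ | ∃ j, eval p ((⇑δ)^[d] (X j)) ≠ 0} ∧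
    (∀ (t : ℂ) (p : Fin n → ℂ),
      p ∈ {q : Fin n → ℂ | ∃ j, eval q ((⇑δ)^[d] (X j)) ≠ 0} →
      flow δ t p ∈ {q : Fin n → ℂ | ∃ j, eval q ((⇑δ)^[d] (X j)) ≠ 0}) ∧
    (∀ K : Set ((Fin n → ℂ) × (Fin n → ℂ)), IsCompact K →
      K ⊆ {q : Fin n → ℂ | ∃ j, eval q ((⇑δ)^[d] (X j)) ≠ 0} ×ˢ
          {q : Fin n → ℂ | ∃ j, eval q ((⇑δ)^[d] (X j)) ≠ 0} →
      IsCompact ((fun tp : ℂ × (Fin n → ℂ) => (tp.2, flow δ tp.1 tp.2)) ⁻¹' K)) := by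
  refine ⟨?_, ?_, ?_⟩
  · -- openness
    have : {p : Fin n → ℂ | ∃ j, eval p ((⇑δ)^[d] (X j)) ≠ 0}
        = ⋃ j, (fun p : Fin n → ℂ => eval p ((⇑δ)^[d] (X j))) ⁻¹' {0}ᶜ := by
      ext q; simp [Set.mem_iUnion]
    rw [this]
    exact isOpen_iUnion fun j =>
      isOpen_compl_singleton.preimage (MvPolynomial.continuous_eval _)
  · -- invariance
    rintro t p ⟨j, hj⟩
    exact ⟨j, by rwa [eval_flow_iter t p hln d j (hdeg j)]⟩
  · -- properness
    intro K hKc hKU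
    rcases K.eq_empty_or_nonempty with rfl | hKne
    · simp only [Set.preimage_empty]; exact isCompact_empty
    set Φ : ℂ × (Fin n → ℂ) → (Fin n → ℂ) × (Fin n → ℂ) :=
      fun tp => (tp.2, flow δ tp.1 tp.2) with hΦ
    have hΦc : Continuous Φ := continuous_snd.prodMk (flow_continuous hdeg)
    have hPc : IsClosed (Φ ⁻¹' K) := hKc.isClosed.preimage hΦc
    -- the two projections of K
    set K₁ : Set (Fin n → ℂ) := Prod.fst '' K with hK₁
    set K₂ : Set (Fin n → ℂ) := Prod.snd '' K with hK₂
    have hK₁c : IsCompact K₁ := hKc.image continuous_fst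
    have hK₂c : IsCompact K₂ := hKc.image continuous_snd
    have hK₁ne : K₁.Nonempty := hKne.image _
    -- lower bound c on Σ_j |eval p (δ^d X j)| over K₁
    set g : (Fin n → ℂ) → ℝ :=
      fun q => ∑ j : Fin n, ‖eval q ((⇑δ)^[d] (X j))‖ with hg
    have hgc : Continuous g :=
      continuous_finset_sum _ fun j _ => (MvPolynomial.continuous_eval _).norm
    obtain ⟨p₀, hp₀K, hp₀min⟩ := hK₁c.exists_isMinOn hK₁ne hgc.continuousOn
    set c : ℝ := g p₀ with hc
    have hK₁U : K₁ ⊆ {q : Fin n → ℂ | ∃ j, eval q ((⇑δ)^[d] (X j)) ≠ 0} := by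
      rintro q ⟨x, hxK, rfl⟩
      exact (hKU hxK).1
    have hcpos : 0 < c := by
      obtain ⟨j, hj⟩ := hK₁U hp₀K
      have : ‖eval p₀ ((⇑δ)^[d] (X j))‖ ≤ c :=
        Finset.single_le_sum (f := fun j : Fin n => ‖eval p₀ ((⇑δ)^[d] (X j))‖)
          (fun i _ => norm_nonneg _) (Finset.mem_univ j)
      have h0 : 0 < ‖eval p₀ ((⇑δ)^[d] (X j))‖ := norm_pos_iff.mpr hj
      linarith
    -- n is positive
    have hnpos : 0 < n := by
      obtain ⟨j, _⟩ := hK₁U hp₀K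
      exact Fin.pos j
    -- upper bound M on all |eval p (δ^m X j)| over K₁
    set H : (Fin n → ℂ) → ℝ :=
      fun q => ∑ m ∈ range (d + 1), ∑ j : Fin n, ‖eval q ((⇑δ)^[m] (X j))‖ with hH
    have hHc : Continuous H :=
      continuous_finset_sum _ fun m _ =>
        continuous_finset_sum _ fun j _ => (MvPolynomial.continuous_eval _).norm
    obtain ⟨q₀, hq₀K, hq₀max⟩ := hK₁c.exists_isMaxOn hK₁ne hHc.continuousOn
    set M : ℝ := H q₀ with hM
    have hMbound : ∀ q ∈ K₁, ∀ m ∈ range (d + 1), ∀ j : Fin n,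
        ‖eval q ((⇑δ)^[m] (X j))‖ ≤ M := by
      intro q hq m hm j
      have h1 : ‖eval q ((⇑δ)^[m] (X j))‖ ≤ ∑ j' : Fin n, ‖eval q ((⇑δ)^[m] (X j'))‖ :=
        Finset.single_le_sum (f := fun j' : Fin n => ‖eval q ((⇑δ)^[m] (X j'))‖)
          (fun i _ => norm_nonneg _) (Finset.mem_univ j)
      have h2 : (∑ j' : Fin n, ‖eval q ((⇑δ)^[m] (X j'))‖) ≤ H q :=
        Finset.single_le_sum
          (f := fun m => ∑ j' : Fin n, ‖eval q ((⇑δ)^[m] (X j'))‖)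
          (fun i _ => Finset.sum_nonneg fun _ _ => norm_nonneg _) hm
      have h3 : H q ≤ M := hq₀max hq
      linarith
    have hMnonneg : 0 ≤ M := by
      have := hMbound q₀ hq₀K 0 (Finset.mem_range.mpr (by omega)) ⟨0, hnpos⟩
      exact le_trans (norm_nonneg _) this
    -- bound B on K₂
    obtain ⟨B, hB⟩ : ∃ B : ℝ, ∀ q ∈ K₂, ‖q‖ ≤ B := by
      obtain ⟨r, hr⟩ := hK₂c.isBounded.subset_closedBall 0
      exact ⟨r, fun q hq => mem_closedBall_zero_iff.mp (hr hq)⟩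
    have hBnonneg : 0 ≤ B := by
      obtain ⟨x, hx⟩ := hKne
      exact le_trans (norm_nonneg _) (hB x.2 ⟨x, hx, rfl⟩)
    -- the time bound
    set R : ℝ := max 1 ((B + d * M) * (d.factorial) / (c / n)) with hR
    -- boundedness
    have hsub : Φ ⁻¹' K ⊆ Metric.closedBall (0 : ℂ) R ×ˢ K₁ := by
      rintro ⟨t, p⟩ htp
      have hpK₁ : p ∈ K₁ := ⟨Φ (t, p), htp, rfl⟩
      have hflowK₂ : flow δ t p ∈ K₂ := ⟨Φ (t, p), htp, rfl⟩
      refine ⟨?_, hpK₁⟩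
      simp only [Metric.mem_closedBall, dist_zero_right]
      -- choose j with large |eval p (δ^d X j)|
      have hcn : 0 < c / n := div_pos hcpos (by exact_mod_cast hnpos)
      obtain ⟨j, hj⟩ : ∃ j : Fin n, c / n ≤ ‖eval p ((⇑δ)^[d] (X j))‖ := by
        by_contra hcon
        push_neg at hcon
        have hlt : g p < n * (c / n) := by
          calc g p = ∑ j : Fin n, ‖eval p ((⇑δ)^[d] (X j))‖ := rfl
          _ < ∑ _j : Fin n, c / n := by
              apply Finset.sum_lt_sum_of_nonempty
              · exact Finset.univ_nonempty_iff.mpr ⟨⟨0, hnpos⟩⟩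
              · exact fun j _ => hcon j
          _ = n * (c / n) := by simp [Finset.sum_const, nsmul_eq_mul]
        have : (n : ℝ) * (c / n) = c := by
          field_simp
        rw [this] at hlt
        exact absurd (hp₀min hpK₁) (not_le.mpr hlt)
      -- the polynomial estimate
      by_contra hcon
      push_neg at hcon
      set a : ℝ := ‖t‖ with ha
      have ha1 : 1 ≤ a := le_trans (le_max_left _ _) hcon.le
      have ha0 : 0 < a := lt_of_lt_of_le zero_lt_one ha1
      -- key identity
      have hflow : flow δ t p j
          = (∑ m ∈ range d, (t ^ m / (m.factorial : ℂ)) * eval p ((⇑δ)^[m] (X j)))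
            + (t ^ d / (d.factorial : ℂ)) * eval p ((⇑δ)^[d] (X j)) := by
        rw [flow_eq_sum t p hdeg j, Finset.sum_range_succ]
      have hqj : ‖flow δ t p j‖ ≤ B :=
        le_trans (norm_le_pi_norm (flow δ t p) j) (hB _ hflowK₂)
      have hmain : a ^ d / (d.factorial : ℝ) * (c / n)
          ≤ B + ∑ m ∈ range d, a ^ m / (m.factorial : ℝ) * M := by
        have h1 : a ^ d / (d.factorial : ℝ) * (c / n)
            ≤ ‖(t ^ d / (d.factorial : ℂ)) * eval p ((⇑δ)^[d] (X j))‖ := by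
          rw [norm_mul, norm_div, norm_pow, Complex.norm_natCast]
          apply mul_le_mul_of_nonneg_left hj
          positivity
        have h2 : ‖(t ^ d / (d.factorial : ℂ)) * eval p ((⇑δ)^[d] (X j))‖
            ≤ ‖flow δ t p j‖
              + ‖∑ m ∈ range d, (t ^ m / (m.factorial : ℂ)) * eval p ((⇑δ)^[m] (X j))‖ := by
          have : (t ^ d / (d.factorial : ℂ)) * eval p ((⇑δ)^[d] (X j))
              = flow δ t p j
                - ∑ m ∈ range d, (t ^ m / (m.factorial : ℂ)) * eval p ((⇑δ)^[m] (X j)) := by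
            rw [hflow]; ring
          rw [this]
          exact norm_sub_le _ _
        have h3 : ‖∑ m ∈ range d, (t ^ m / (m.factorial : ℂ)) * eval p ((⇑δ)^[m] (X j))‖
            ≤ ∑ m ∈ range d, a ^ m / (m.factorial : ℝ) * M := by
          refine le_trans (norm_sum_le _ _) (Finset.sum_le_sum fun m hm => ?_)
          rw [norm_mul, norm_div, norm_pow, Complex.norm_natCast]
          apply mul_le_mul_of_nonneg_left
          · exact hMbound p hpK₁ m (by simp only [Finset.mem_range] at hm ⊢; omega) j
          · positivity
        linarith
      -- bound the tail sum
      have htail : ∑ m ∈ range d, a ^ m / (m.factorial : ℝ) * M ≤ d * (a ^ (d - 1) * M) := by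
        have : ∀ m ∈ range d, a ^ m / (m.factorial : ℝ) * M ≤ a ^ (d - 1) * M := by
          intro m hm
          have hmd : m ≤ d - 1 := by simp only [Finset.mem_range] at hm; omega
          have h1 : a ^ m / (m.factorial : ℝ) ≤ a ^ m := by
            apply div_le_self (by positivity)
            exact_mod_cast Nat.one_le_iff_ne_zero.mpr (Nat.factorial_ne_zero m)
          have h2 : a ^ m ≤ a ^ (d - 1) := pow_le_pow_right₀ ha1 hmd
          have := mul_le_mul_of_nonneg_right (le_trans h1 h2) hMnonneg
          linarith
        calc ∑ m ∈ range d, a ^ m / (m.factorial : ℝ) * M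
            ≤ ∑ _m ∈ range d, a ^ (d - 1) * M := Finset.sum_le_sum this
          _ = d * (a ^ (d - 1) * M) := by simp [Finset.sum_const, nsmul_eq_mul]
      -- combine
      have hpow : a ^ d = a ^ (d - 1) * a := by
        conv_lhs => rw [show d = (d - 1) + 1 by omega]
        rw [pow_succ]
      have hapow1 : 1 ≤ a ^ (d - 1) := one_le_pow₀ ha1
      have hfinal : a ^ (d - 1) * a * (c / n) / (d.factorial : ℝ)
          ≤ a ^ (d - 1) * (B + d * M) := by
        have hB' : B ≤ a ^ (d - 1) * B := le_mul_of_one_le_left hBnonneg hapow1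
        have hdM : (d : ℝ) * (a ^ (d - 1) * M) = a ^ (d - 1) * (d * M) := by ring
        calc a ^ (d - 1) * a * (c / n) / (d.factorial : ℝ)
            = a ^ d / (d.factorial : ℝ) * (c / n) := by rw [hpow]; ring
          _ ≤ B + ∑ m ∈ range d, a ^ m / (m.factorial : ℝ) * M := hmain
          _ ≤ B + d * (a ^ (d - 1) * M) := by linarith
          _ ≤ a ^ (d - 1) * B + a ^ (d - 1) * (d * M) := by rw [hdM]; linarith
          _ = a ^ (d - 1) * (B + d * M) := by ring
      have hdfacpos : (0 : ℝ) < (d.factorial : ℝ) := by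
        exact_mod_cast Nat.factorial_pos d
      have hapos : 0 < a ^ (d - 1) := by positivity
      have hta : a * (c / n) / (d.factorial : ℝ) ≤ B + d * M := by
        have h' : a ^ (d - 1) * (a * (c / n) / (d.factorial : ℝ))
            ≤ a ^ (d - 1) * (B + d * M) := by
          calc a ^ (d - 1) * (a * (c / n) / (d.factorial : ℝ))
              = a ^ (d - 1) * a * (c / n) / (d.factorial : ℝ) := by ring
            _ ≤ _ := hfinal
        exact le_of_mul_le_mul_left h' hapos
      have haR : a ≤ (B + d * M) * (d.factorial) / (c / n) := by
        rw [le_div_iff₀ hcn]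
        rw [div_le_iff₀ hdfacpos] at hta
        exact hta
      have : a ≤ R := le_trans haR (le_max_right _ _)
      linarith
    have hPb : Bornology.IsBounded (Φ ⁻¹' K) :=
      Bornology.IsBounded.subset
        ((Metric.isBounded_closedBall).prod hK₁c.isBounded) hsub
    exact Metric.isCompact_of_isClosed_isBounded hPc hPb
end

section
/- Let δ be a locally nilpotent ℂ-derivation of ℂ[x₁,…,xₙ] with δ² x_j = 0 for all j (a degree-one action), and let θ be the induced flow on ℂⁿ, so θ_t(p) = p + t·((δx₁)(p), …, (δxₙ)(p)). Assume the action is free, i.e., θ_t(p) = p implies t = 0 for every p ∈ ℂⁿ. Then the action is proper: the map ℂ × ℂⁿ → ℂⁿ × ℂⁿ, (t, p) ↦ (p, θ_t(p)), is a proper map, i.e., the preimage of every compact set is compact. -/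
open MvPolynomial

lemma flow_eq {n : ℕ}
    (δ : Derivation ℂ (MvPolynomial (Fin n) ℂ) (MvPolynomial (Fin n) ℂ))
    (hdeg : ∀ j : Fin n, (⇑δ)^[2] (X j) = 0)
    (t : ℂ) (p : Fin n → ℂ) (k : Fin n) :
    flow δ t p k = p k + t * eval p (δ (X k)) := by
  have hz : ∀ m : ℕ, 2 ≤ m → (⇑δ)^[m] (X k : MvPolynomial (Fin n) ℂ) = 0 := by
    intro m hm
    obtain ⟨r, rfl⟩ := Nat.exists_eq_add_of_le hm
    rw [Nat.add_comm, Function.iterate_add_apply, hdeg k,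
      Function.iterate_fixed (map_zero δ) r]
  have hsupp : (Function.support fun m : ℕ =>
      (t ^ m / (m.factorial : ℂ)) * eval p ((⇑δ)^[m] (X k))) ⊆ ({0, 1} : Finset ℕ) := by
    intro m hm
    simp only [Function.mem_support] at hm
    by_contra h
    simp only [Finset.coe_insert, Finset.coe_singleton, Set.mem_insert_iff,
      Set.mem_singleton_iff] at h
    push_neg at h
    have : 2 ≤ m := by omega
    rw [hz m this] at hm
    simp at hm
  rw [flow, finsum_eq_finset_sum_of_support_subset _ hsupp]
  simp [Finset.sum_insert, Finset.mem_singleton]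

/-- If `δ² x_j = 0` for all `j` (a degree-one action, so
`θ_t(p) = p + t·(δx)(p)`) and the action is free, then the action is proper:
`(t,p) ↦ (p, θ_t(p))` has compact preimages of compact sets. -/
theorem free_degree_one_action_is_proper
    {n : ℕ}
    (δ : Derivation ℂ (MvPolynomial (Fin n) ℂ) (MvPolynomial (Fin n) ℂ))
    (hln : ∀ f : MvPolynomial (Fin n) ℂ, ∃ N : ℕ, (⇑δ)^[N] f = 0)
    (hdeg : ∀ j : Fin n, (⇑δ)^[2] (X j) = 0)
    (hfree : ∀ (t : ℂ) (p : Fin n → ℂ), flow δ t p = p → t = 0) :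
    (∀ (t : ℂ) (p : Fin n → ℂ) (k : Fin n),
      flow δ t p k = p k + t * eval p (δ (X k))) ∧
    (∀ K : Set ((Fin n → ℂ) × (Fin n → ℂ)), IsCompact K →
      IsCompact ((fun tp : ℂ × (Fin n → ℂ) => (tp.2, flow δ tp.1 tp.2)) ⁻¹' K)) := by
  refine ⟨flow_eq δ hdeg, ?_⟩
  intro K hK
  set v : (Fin n → ℂ) → (Fin n → ℂ) := fun p k => eval p (δ (X k)) with hv
  have hvcont : Continuous v :=
    continuous_pi fun k => MvPolynomial.continuous_eval (δ (X k))
  have hvne : ∀ p, v p ≠ 0 := by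
    intro p hp
    have h1 : flow δ 1 p = p := by
      funext k
      rw [flow_eq δ hdeg]
      have : eval p (δ (X k)) = 0 := congrFun hp k
      simp [this]
    exact one_ne_zero (hfree 1 p h1)
  -- the map is continuous
  have hFcont : Continuous (fun tp : ℂ × (Fin n → ℂ) => (tp.2, flow δ tp.1 tp.2)) := by
    have hfe : (fun tp : ℂ × (Fin n → ℂ) => flow δ tp.1 tp.2)
        = fun tp => fun k => tp.2 k + tp.1 * eval tp.2 (δ (X k)) := by
      funext tp
      funext k
      exact flow_eq δ hdeg tp.1 tp.2 k
    refine continuous_snd.prodMk ?_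
    rw [hfe]
    refine continuous_pi fun k => ?_
    exact ((continuous_apply k).comp continuous_snd).add
      (continuous_fst.mul ((MvPolynomial.continuous_eval (δ (X k))).comp continuous_snd))
  set S := (fun tp : ℂ × (Fin n → ℂ) => (tp.2, flow δ tp.1 tp.2)) ⁻¹' K with hS
  rcases S.eq_empty_or_nonempty with hE | hNE
  · rw [hE]; exact isCompact_empty
  rw [Metric.isCompact_iff_isClosed_bounded]
  constructor
  · exact hK.isClosed.preimage hFcont
  · -- bound
    obtain ⟨M, hM⟩ := hK.isBounded.subset_closedBall 0
    -- positive min of ‖v ·‖ on fst '' K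
    have hC : IsCompact (Prod.fst '' K) := hK.image continuous_fst
    have hCne : (Prod.fst '' K).Nonempty := by
      obtain ⟨tp, htp⟩ := hNE
      exact ⟨tp.2, ⟨_, htp, rfl⟩⟩
    obtain ⟨p₀, hp₀, hmin⟩ := hC.exists_isMinOn hCne
      (continuous_norm.comp hvcont).continuousOn
    set ε := ‖v p₀‖ with hε
    have hεpos : 0 < ε := norm_pos_iff.mpr (hvne p₀)
    refine (Metric.isBounded_closedBall (x := (0 : ℂ × (Fin n → ℂ)))
      (r := max (2 * max M 0 / ε) (max M 0))).subset ?_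
    intro tp htp
    have hmem : (tp.2, flow δ tp.1 tp.2) ∈ K := htp
    have hnorm : ‖(tp.2, flow δ tp.1 tp.2)‖ ≤ max M 0 := by
      have := hM hmem
      rw [Metric.mem_closedBall, dist_zero_right] at this
      exact le_trans this (le_max_left _ _)
    have hp2 : ‖tp.2‖ ≤ max M 0 := le_trans (le_max_left _ _) (by
      rw [Prod.norm_def] at hnorm; exact hnorm)
    have hθ : ‖flow δ tp.1 tp.2‖ ≤ max M 0 := le_trans (le_max_right _ _) (by
      rw [Prod.norm_def] at hnorm; exact hnorm)
    have hdiff : flow δ tp.1 tp.2 - tp.2 = tp.1 • v tp.2 := by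
      funext k
      simp only [Pi.sub_apply, Pi.smul_apply, smul_eq_mul, hv]
      rw [flow_eq δ hdeg]
      ring
    have hsmul : ‖tp.1‖ * ‖v tp.2‖ ≤ 2 * max M 0 := by
      rw [← norm_smul, ← hdiff]
      calc ‖flow δ tp.1 tp.2 - tp.2‖ ≤ ‖flow δ tp.1 tp.2‖ + ‖tp.2‖ := norm_sub_le _ _
        _ ≤ 2 * max M 0 := by linarith
    have hεle : ε ≤ ‖v tp.2‖ := hmin ⟨_, hmem, rfl⟩
    have ht1 : ‖tp.1‖ ≤ 2 * max M 0 / ε := by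
      rw [le_div_iff₀ hεpos]
      calc ‖tp.1‖ * ε ≤ ‖tp.1‖ * ‖v tp.2‖ :=
            mul_le_mul_of_nonneg_left hεle (norm_nonneg _)
        _ ≤ 2 * max M 0 := hsmul
    rw [Metric.mem_closedBall, dist_zero_right, Prod.norm_def]
    exact max_le_max ht1 hp2
end

section
/- Define σ : ℂ × ℂ⁴ → ℂ⁴ by σ_t(x₁,x₂,x₃,x₄) := (x₁, x₂ + t x₁, x₃ + t x₂ + t² x₁/2, x₄ + t(x₂² − 2x₁x₃ − 1)). Then σ is an action of the additive group (ℂ,+) on ℂ⁴ (σ_0 = id and σ_s ∘ σ_t = σ_{s+t}), the polynomial x₂² − 2x₁x₃ − 1 is invariant under σ, and the action is free: σ_t(x) = x implies t = 0, for every x ∈ ℂ⁴. -/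
/-- The action of `(ℂ,+)` on `ℂ⁴` induced by the locally nilpotent derivation
`δ = x₁ ∂/∂x₂ + x₂ ∂/∂x₃ + (x₂² − 2x₁x₃ − 1) ∂/∂x₄`. -/
noncomputable def sigma4 (t : ℂ) (x : Fin 4 → ℂ) : Fin 4 → ℂ :=
  ![x 0, x 1 + t * x 0, x 2 + t * x 1 + t ^ 2 * x 0 / 2,
    x 3 + t * ((x 1) ^ 2 - 2 * x 0 * x 2 - 1)]

/-- `σ` is an action of `(ℂ,+)` on `ℂ⁴`, the polynomial
`x₂² − 2x₁x₃ − 1` is `σ`-invariant, and the action is free. -/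
theorem sigma4_is_free_additive_action_with_invariant :
    (∀ x : Fin 4 → ℂ, sigma4 0 x = x) ∧
    (∀ (s t : ℂ) (x : Fin 4 → ℂ), sigma4 s (sigma4 t x) = sigma4 (s + t) x) ∧
    (∀ (t : ℂ) (x : Fin 4 → ℂ),
      (sigma4 t x 1) ^ 2 - 2 * sigma4 t x 0 * sigma4 t x 2 - 1
        = (x 1) ^ 2 - 2 * x 0 * x 2 - 1) ∧
    (∀ (t : ℂ) (x : Fin 4 → ℂ), sigma4 t x = x → t = 0) := by
  refine ⟨?_, ?_, ?_, ?_⟩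
  · intro x
    funext i
    fin_cases i <;> simp [sigma4]
  · intro s t x
    funext i
    fin_cases i <;> simp [sigma4] <;> ring
  · intro t x
    simp [sigma4]
    ring
  · intro t x h
    by_contra ht
    have h0 : x 0 = 0 := by
      have := congrFun h 1
      simp [sigma4] at this
      rcases this with h | h
      · exact absurd h ht
      · exact h
    have h1 : x 1 = 0 := by
      have := congrFun h 2
      simp [sigma4, h0] at this
      rcases this with h | h
      · exact absurd h ht
      · exact h
    have := congrFun h 3
    simp [sigma4, h0, h1] at this
    exact ht this
end

section
/- Let σ be the action of (ℂ,+) on ℂ⁴ given by σ_t(x₁,x₂,x₃,x₄) := (x₁, x₂ + t x₁, x₃ + t x₂ + t² x₁/2, x₄ + t(x₂² − 2x₁x₃ − 1)). The points a := (0,1,0,0) and b := (0,−1,0,0) lie on distinct σ-orbits, yet they cannot be separated: for every ε > 0 there exist x ∈ ℂ⁴ and t ∈ ℂ with ‖x − a‖ < ε and ‖σ_t(x) − b‖ < ε (indeed x = (ε′,1,0,0) and t = −2/ε′ work for small ε′ ≠ 0). Consequently the quotient topology on the orbit space ℂ⁴/ℂ (the quotient of ℂ⁴ by the equivalence relation x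 ∼ y iff y = σ_t(x) for some t ∈ ℂ) is not Hausdorff. -/
lemma sigma4_zero (x : Fin 4 → ℂ) : sigma4 0 x = x := by
  funext i; fin_cases i <;> simp [sigma4]

lemma sigma4_add (s t : ℂ) (x : Fin 4 → ℂ) :
    sigma4 s (sigma4 t x) = sigma4 (s + t) x := by
  funext i; fin_cases i <;> simp [sigma4] <;> ring

lemma sigma4_equiv :
    Equivalence (fun x y : Fin 4 → ℂ => ∃ t : ℂ, sigma4 t x = y) := by
  constructor
  · exact fun x => ⟨0, sigma4_zero x⟩
  · rintro x y ⟨t, rfl⟩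
    exact ⟨-t, by rw [sigma4_add]; simp [sigma4_zero]⟩
  · rintro x y z ⟨t, rfl⟩ ⟨s, rfl⟩
    exact ⟨s + t, (sigma4_add s t x).symm⟩

lemma sigma4_part1 : ¬ ∃ t : ℂ, sigma4 t ![0, 1, 0, 0] = ![0, -1, 0, 0] := by
  rintro ⟨t, h⟩
  have := congrFun h 1
  simp [sigma4] at this
  norm_num at this

lemma sigma4_part2 : ∀ ε : ℝ, 0 < ε → ∃ (x : Fin 4 → ℂ) (t : ℂ),
    ‖x - ![0, 1, 0, 0]‖ < ε ∧ ‖sigma4 t x - ![0, -1, 0, 0]‖ < ε := by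
  intro ε hε
  refine ⟨![(ε/2 : ℝ), 1, 0, 0], -2 / (ε/2 : ℝ), ?_, ?_⟩
  · rw [pi_norm_lt_iff hε]
    intro i; fin_cases i <;>
      simp [Complex.norm_real, abs_of_pos hε, abs_of_pos (half_pos hε)] <;> linarith
  · have hne : ((ε/2 : ℝ) : ℂ) ≠ 0 := by
      simp only [ne_eq, Complex.ofReal_eq_zero]
      positivity
    have hx : sigma4 (-2 / (ε/2 : ℝ)) ![(ε/2 : ℝ), 1, 0, 0] - (![0, -1, 0, 0] : Fin 4 → ℂ)
        = ![((ε/2 : ℝ) : ℂ), 0, 0, 0] := by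
      have hεc : (ε : ℂ) ≠ 0 := Complex.ofReal_ne_zero.mpr hε.ne'
      funext i
      fin_cases i <;> simp [sigma4, Pi.sub_apply] <;> field_simp <;> ring
    rw [hx, pi_norm_lt_iff hε]
    intro i; fin_cases i <;>
      simp [Complex.norm_real, abs_of_pos hε, abs_of_pos (half_pos hε)] <;> linarith

/-- The points `a = (0,1,0,0)` and `b = (0,−1,0,0)` lie on distinct
`σ`-orbits but cannot be separated; consequently the orbit space with its quotient
topology is not Hausdorff. -/
theorem sigma4_orbit_space_is_not_hausdorff :
    (¬ ∃ t : ℂ, sigma4 t ![0, 1, 0, 0] = ![0, -1, 0, 0]) ∧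
    (∀ ε : ℝ, 0 < ε → ∃ (x : Fin 4 → ℂ) (t : ℂ),
      ‖x - ![0, 1, 0, 0]‖ < ε ∧ ‖sigma4 t x - ![0, -1, 0, 0]‖ < ε) ∧
    ¬ T2Space (Quot (fun x y : Fin 4 → ℂ => ∃ t : ℂ, sigma4 t x = y)) := by
  set r : (Fin 4 → ℂ) → (Fin 4 → ℂ) → Prop :=
    fun x y => ∃ t : ℂ, sigma4 t x = y with hr
  refine ⟨sigma4_part1, sigma4_part2, ?_⟩
  intro h
  have hne : Quot.mk r ![0, 1, 0, 0] ≠ Quot.mk r ![0, -1, 0, 0] := by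
    intro heq
    exact sigma4_part1 ((Equivalence.eqvGen_iff sigma4_equiv).mp
      (Quot.eqvGen_exact heq))
  obtain ⟨U, V, hU, hV, haU, hbV, hdisj⟩ := t2_separation hne
  have hUo : IsOpen (Quot.mk r ⁻¹' U) := hU.preimage continuous_quot_mk
  have hVo : IsOpen (Quot.mk r ⁻¹' V) := hV.preimage continuous_quot_mk
  obtain ⟨ε₁, hε₁, hball₁⟩ := Metric.isOpen_iff.mp hUo _ haU
  obtain ⟨ε₂, hε₂, hball₂⟩ := Metric.isOpen_iff.mp hVo _ hbV
  obtain ⟨x, t, hx, hxt⟩ := sigma4_part2 (min ε₁ ε₂) (lt_min hε₁ hε₂)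
  have hxU : x ∈ Quot.mk r ⁻¹' U := by
    apply hball₁
    rw [Metric.mem_ball, dist_eq_norm]
    exact lt_of_lt_of_le hx (min_le_left _ _)
  have hxV : sigma4 t x ∈ Quot.mk r ⁻¹' V := by
    apply hball₂
    rw [Metric.mem_ball, dist_eq_norm]
    exact lt_of_lt_of_le hxt (min_le_right _ _)
  have hq : Quot.mk r x = Quot.mk r (sigma4 t x) := Quot.sound ⟨t, rfl⟩
  simp only [Set.mem_preimage] at hxU hxV
  rw [hq] at hxU
  exact hdisj.ne_of_mem hxU hxV rfl
end
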